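/- Let Γ be a cost function for cluster trees of the form Γ(T) = Σ over internal nodes N with children N1, N2 of w(V(N1),V(N2))·g(|V(N1)|,|V(N2)|), for some function g: ℕ×ℕ → ℝ₊. Then Γ is admissible — i.e., for every similarity graph G generated from a minimal ultrametric, a cluster tree for G attains the minimum of Γ if and only if it is a generating tree for G — if and only if the following three conditions hold: (1) for every unit-weight clique (complete graph with all edge weights 1), all cluster trees have the same Γ-cost; (2) g(n1,n2) = g(n2,n1) for all n1,n2 ∈ ℕ; (3) g(n1+1,n2) > g(n1,n2) for all n1,n2 ∈ ℕ. -/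

import Mathlib

open scoped BigOperators

attribute [local instance] Classical.propDecidable

noncomputable section

/-! ### Cluster trees -/

/-- A (binary, rooted) hierarchical-clustering tree whose leaves are labelled by
vertices of `V`. -/
inductive ClusterTree (V : Type) : Type where
  | leaf : V → ClusterTree V
  | node : ClusterTree V → ClusterTree V → ClusterTree V

namespace ClusterTree

variable {V : Type}

/-- The list of leaf labels of the tree (left-to-right). -/
def leavesList : ClusterTree V → List V
  | leaf v => [v]
  | node L R => leavesList L ++ leavesList R

/-- The set of leaf labels of the tree. -/
def leaves [DecidableEq V] (T : ClusterTree V) : Finset V :=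
  T.leavesList.toFinset

end ClusterTree

section Defs

variable {V : Type}

/-- `T` is a cluster tree for the whole (finite) vertex set `V`: its leaves are
pairwise distinct and exhaust the vertices. -/
def IsClusterTree [DecidableEq V] [Fintype V] (T : ClusterTree V) : Prop :=
  T.leavesList.Nodup ∧ T.leaves = Finset.univ

/-- `IsSubtreeOf s T` : `s` occurs as a rooted subtree of `T`. -/
def IsSubtreeOf : ClusterTree V → ClusterTree V → Prop
  | s, ClusterTree.leaf v => s = ClusterTree.leaf v
  | s, ClusterTree.node L R => s = ClusterTree.node L R ∨ IsSubtreeOf s L ∨ IsSubtreeOf s R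

/-- The subtree of `T` rooted at the lowest common ancestor of the leaves `x` and `y`. -/
def lcaSubtree [DecidableEq V] : ClusterTree V → V → V → ClusterTree V
  | ClusterTree.leaf v, _, _ => ClusterTree.leaf v
  | ClusterTree.node L R, x, y =>
    if x ∈ L.leaves ∧ y ∈ L.leaves then lcaSubtree L x y
    else if x ∈ R.leaves ∧ y ∈ R.leaves then lcaSubtree R x y
    else ClusterTree.node L R

/-- `w(A, B) = ∑_{a ∈ A, b ∈ B} w a b`. -/
def cutWeight (w : V → V → ℝ) (A B : Finset V) : ℝ := ∑ a ∈ A, ∑ b ∈ B, w a b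

/-- `w(A) = ∑_{a, b ∈ A} w a b` (ordered pairs; each edge counted twice). -/
def innerWeight (w : V → V → ℝ) (A : Finset V) : ℝ := ∑ a ∈ A, ∑ b ∈ A, w a b

/-- `∑_{e ∈ E} w(e)`, for a symmetric weight function with zero diagonal. -/
def totalWeight [Fintype V] (w : V → V → ℝ) : ℝ := (∑ u : V, ∑ v : V, w u v) / 2

/-- Cost of a cluster tree: each internal node `N` with children `N₁, N₂`
contributes `w(V(N₁), V(N₂)) · g(|V(N₁)|, |V(N₂)|)`. -/
def treeCost [DecidableEq V] (w : V → V → ℝ) (g : ℕ → ℕ → ℝ) : ClusterTree V → ℝ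
  | ClusterTree.leaf _ => 0
  | ClusterTree.node L R =>
      cutWeight w L.leaves R.leaves * g L.leaves.card R.leaves.card
        + treeCost w g L + treeCost w g R

/-- Dasgupta's cost (= `treeCost` with `g (a, b) = a + b`). -/
def dasguptaCost [DecidableEq V] (w : V → V → ℝ) : ClusterTree V → ℝ
  | ClusterTree.leaf _ => 0
  | ClusterTree.node L R =>
      ((L.leaves.card + R.leaves.card : ℕ) : ℝ) * cutWeight w L.leaves R.leaves
        + dasguptaCost w L + dasguptaCost w R

/-! ### Generating trees -/

/-- `T` is a generating tree for the similarity graph `w` : there is a nonnegative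
weight function on the internal nodes, non-increasing from leaves towards the root,
realizing every edge weight at the corresponding LCA. -/
def IsGenerating [DecidableEq V] (w : V → V → ℝ) (T : ClusterTree V) : Prop :=
  ∃ W : ClusterTree V → ℝ,
    (∀ s, IsSubtreeOf s T → 0 ≤ W s) ∧
    (∀ L R, IsSubtreeOf (ClusterTree.node L R) T →
      ∀ s, IsSubtreeOf s L ∨ IsSubtreeOf s R → W (ClusterTree.node L R) ≤ W s) ∧
    (∀ x y, x ∈ T.leaves → y ∈ T.leaves → x ≠ y → w x y = W (lcaSubtree T x y))

/-- Generating tree in the dissimilarity setting (weights non-decreasing from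
leaves towards the root). -/
def IsGeneratingDissim [DecidableEq V] (w : V → V → ℝ) (T : ClusterTree V) : Prop :=
  ∃ W : ClusterTree V → ℝ,
    (∀ s, IsSubtreeOf s T → 0 ≤ W s) ∧
    (∀ L R, IsSubtreeOf (ClusterTree.node L R) T →
      ∀ s, IsSubtreeOf s L ∨ IsSubtreeOf s R → W s ≤ W (ClusterTree.node L R)) ∧
    (∀ x y, x ∈ T.leaves → y ∈ T.leaves → x ≠ y → w x y = W (lcaSubtree T x y))

/-- Strictly generating tree (similarity setting). -/
def IsStrictlyGenerating [DecidableEq V] (w : V → V → ℝ) (T : ClusterTree V) : Prop :=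
  ∃ W : ClusterTree V → ℝ,
    (∀ s, IsSubtreeOf s T → 0 ≤ W s) ∧
    (∀ L R, IsSubtreeOf (ClusterTree.node L R) T →
      ∀ s, IsSubtreeOf s L ∨ IsSubtreeOf s R → W (ClusterTree.node L R) < W s) ∧
    (∀ x y, x ∈ T.leaves → y ∈ T.leaves → x ≠ y → w x y = W (lcaSubtree T x y))

/-- Strictly generating tree (dissimilarity setting). -/
def IsStrictlyGeneratingDissim [DecidableEq V] (w : V → V → ℝ) (T : ClusterTree V) : Prop :=
  ∃ W : ClusterTree V → ℝ,
    (∀ s, IsSubtreeOf s T → 0 ≤ W s) ∧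
    (∀ L R, IsSubtreeOf (ClusterTree.node L R) T →
      ∀ s, IsSubtreeOf s L ∨ IsSubtreeOf s R → W s < W (ClusterTree.node L R)) ∧
    (∀ x y, x ∈ T.leaves → y ∈ T.leaves → x ≠ y → w x y = W (lcaSubtree T x y))

/-! ### Ultrametrics and ground-truth inputs -/

/-- `d` is an ultrametric on `V`. -/
def IsUltrametric (d : V → V → ℝ) : Prop :=
  (∀ x, d x x = 0) ∧ (∀ x y, d x y = 0 → x = y) ∧ (∀ x y, d x y = d y x) ∧
  (∀ x y, 0 ≤ d x y) ∧ (∀ x y z, d x y ≤ max (d x z) (d y z))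

/-- `w` is a similarity graph generated from an ultrametric via a
non-increasing nonnegative function `f`. -/
def GeneratedFromUltrametric (w : V → V → ℝ) : Prop :=
  ∃ (d : V → V → ℝ) (f : ℝ → ℝ),
    IsUltrametric d ∧
    (∀ a b : ℝ, 0 ≤ a → a ≤ b → f b ≤ f a) ∧
    (∀ a : ℝ, 0 ≤ a → 0 ≤ f a) ∧
    (∀ x y : V, x ≠ y → w x y = f (d x y))

/-- `w` is a dissimilarity graph generated from an ultrametric via a
non-decreasing nonnegative function `f`. -/
def GeneratedFromUltrametricDissim (w : V → V → ℝ) : Prop :=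
  ∃ (d : V → V → ℝ) (f : ℝ → ℝ),
    IsUltrametric d ∧
    (∀ a b : ℝ, 0 ≤ a → a ≤ b → f a ≤ f b) ∧
    (∀ a : ℝ, 0 ≤ a → 0 ≤ f a) ∧
    (∀ x y : V, x ≠ y → w x y = f (d x y))

/-- `w` is a similarity graph generated from a *minimal* ultrametric:
pairs with equal weights are at equal ultrametric distance. -/
def GeneratedFromMinimalUltrametric (w : V → V → ℝ) : Prop :=
  ∃ (d : V → V → ℝ) (f : ℝ → ℝ),
    IsUltrametric d ∧
    (∀ a b : ℝ, 0 ≤ a → a ≤ b → f b ≤ f a) ∧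
    (∀ a : ℝ, 0 ≤ a → 0 ≤ f a) ∧
    (∀ x y : V, x ≠ y → w x y = f (d x y)) ∧
    (∀ u v u' v' : V, u ≠ v → u' ≠ v' → f (d u v) = f (d u' v') → d u v = d u' v')

/-- Dissimilarity analogue of `GeneratedFromMinimalUltrametric`. -/
def GeneratedFromMinimalUltrametricDissim (w : V → V → ℝ) : Prop :=
  ∃ (d : V → V → ℝ) (f : ℝ → ℝ),
    IsUltrametric d ∧
    (∀ a b : ℝ, 0 ≤ a → a ≤ b → f a ≤ f b) ∧
    (∀ a : ℝ, 0 ≤ a → 0 ≤ f a) ∧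
    (∀ x y : V, x ≠ y → w x y = f (d x y)) ∧
    (∀ u v u' v' : V, u ≠ v → u' ≠ v' → f (d u v) = f (d u' v') → d u v = d u' v')

/-- `w` is a `δ`-adversarially-perturbed (similarity) ground-truth input. -/
def IsDeltaPerturbedGroundTruth (w : V → V → ℝ) (δ : ℝ) : Prop :=
  ∃ (d : V → V → ℝ) (f : ℝ → ℝ),
    IsUltrametric d ∧
    (∀ a b : ℝ, 0 ≤ a → a ≤ b → f b ≤ f a) ∧
    (∀ a : ℝ, 0 ≤ a → 0 ≤ f a) ∧
    (∀ x y : V, x ≠ y → f (d x y) ≤ w x y ∧ w x y ≤ δ * f (d x y))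

end Defs

/-- The unit-weight clique on `V`. -/
def cliqueW (V : Type) [DecidableEq V] : V → V → ℝ := fun x y => if x = y then 0 else 1

/-- Admissibility of a cost function (similarity setting): on every similarity graph
generated from a minimal ultrametric, a cluster tree minimizes the cost
iff it is a generating tree. -/
def Admissible (g : ℕ → ℕ → ℝ) : Prop :=
  ∀ (V : Type) [Fintype V] [DecidableEq V] (w : V → V → ℝ),
    GeneratedFromMinimalUltrametric w →
    ∀ T : ClusterTree V, IsClusterTree T →
      ((∀ T' : ClusterTree V, IsClusterTree T' → treeCost w g T ≤ treeCost w g T')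
        ↔ IsGenerating w T)

/-- Admissibility of a value function (dissimilarity setting): on every dissimilarity
graph generated from a minimal ultrametric, a cluster tree maximizes the value
iff it is a generating tree. -/
def AdmissibleDissim (g : ℕ → ℕ → ℝ) : Prop :=
  ∀ (V : Type) [Fintype V] [DecidableEq V] (w : V → V → ℝ),
    GeneratedFromMinimalUltrametricDissim w →
    ∀ T : ClusterTree V, IsClusterTree T →
      ((∀ T' : ClusterTree V, IsClusterTree T' → treeCost w g T' ≤ treeCost w g T)
        ↔ IsGeneratingDissim w T)

/-! ### Agglomerative (linkage) algorithms, modelled as a nondeterministic relation -/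

/-- The initial state of an agglomerative algorithm: all singleton trees. -/
def initState (V : Type) [Fintype V] : Multiset (ClusterTree V) :=
  Finset.univ.val.map ClusterTree.leaf

/-- One merge step of a generic linkage algorithm: merge two candidate trees whose
leaf-set distance `D` is best (w.r.t. `better a b` = "`a` is at least as good as `b`")
among all candidate pairs; any tie-breaking choice is allowed. -/
inductive MergeStep {V : Type} [DecidableEq V] (D : Finset V → Finset V → ℝ)
    (better : ℝ → ℝ → Prop) :
    Multiset (ClusterTree V) → Multiset (ClusterTree V) → Prop where
  | step : ∀ (rest : Multiset (ClusterTree V)) (T1 T2 : ClusterTree V),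
      (∀ (T1' T2' : ClusterTree V) (rest' : Multiset (ClusterTree V)),
          T1 ::ₘ T2 ::ₘ rest = T1' ::ₘ T2' ::ₘ rest' →
          better (D T1.leaves T2.leaves) (D T1'.leaves T2'.leaves)) →
      MergeStep D better (T1 ::ₘ T2 ::ₘ rest) (ClusterTree.node T1 T2 ::ₘ rest)

/-- `T` is a possible output of the linkage algorithm with dissimilarity/similarity
measure `D` and preference `better`. -/
def IsLinkageOutput {V : Type} [Fintype V] [DecidableEq V]
    (D : Finset V → Finset V → ℝ) (better : ℝ → ℝ → Prop) (T : ClusterTree V) : Prop :=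
  Relation.ReflTransGen (MergeStep D better) (initState V) {T}

/-- Average-linkage measure. -/
def avgDist {V : Type} (w : V → V → ℝ) (A B : Finset V) : ℝ :=
  cutWeight w A B / ((A.card : ℝ) * (B.card : ℝ))

/-- Single-linkage measure: `min_{x ∈ A, y ∈ B} w x y`. -/
def minLinkDist {V : Type} [DecidableEq V] (w : V → V → ℝ) (A B : Finset V) : ℝ :=
  (((A ×ˢ B).image fun p => w p.1 p.2).min).untopD 0

/-- Complete-linkage measure: `max_{x ∈ A, y ∈ B} w x y`. -/
def maxLinkDist {V : Type} [DecidableEq V] (w : V → V → ℝ) (A B : Finset V) : ℝ :=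
  (((A ×ˢ B).image fun p => w p.1 p.2).max).unbotD 0

/-! ### Cuts -/

section Cuts

variable {V : Type}

/-- `A ⊕ x` : add `x` to `A` if absent, remove it if present. -/
def symmDiffV [DecidableEq V] (A : Finset V) (x : V) : Finset V :=
  if x ∈ A then A.erase x else insert x A

/-- `(A, B)` is an `ε/|A ∪ B|`-locally-densest cut of the induced subgraph on `A ∪ B`. -/
def IsLocallyDensestCut [DecidableEq V] (w : V → V → ℝ) (ε : ℝ) (A B : Finset V) : Prop :=
  ∀ x ∈ A ∪ B,
    cutWeight w (symmDiffV A x) (symmDiffV B x) /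
        (((symmDiffV A x).card : ℝ) * ((symmDiffV B x).card : ℝ)) ≤
      (1 + ε / ((A ∪ B).card : ℝ)) *
        (cutWeight w A B / ((A.card : ℝ) * (B.card : ℝ)))

/-- Cluster trees obtained by recursively splitting along `ε/n`-locally-densest cuts. -/
def IsRecLocallyDensestCutTree [DecidableEq V] (w : V → V → ℝ) (ε : ℝ) :
    ClusterTree V → Prop
  | ClusterTree.leaf _ => True
  | ClusterTree.node L R =>
      IsLocallyDensestCut w ε L.leaves R.leaves ∧
      IsRecLocallyDensestCutTree w ε L ∧ IsRecLocallyDensestCutTree w ε R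

/-- Cluster trees obtained by recursively splitting along `φ`-approximate sparsest cuts. -/
def IsRecApproxSparsestCutTree [DecidableEq V] (w : V → V → ℝ) (φ : ℝ) :
    ClusterTree V → Prop
  | ClusterTree.leaf _ => True
  | ClusterTree.node L R =>
      (∀ S : Finset V, S ⊆ L.leaves ∪ R.leaves → S.Nonempty → S ⊂ L.leaves ∪ R.leaves →
        cutWeight w L.leaves R.leaves / ((L.leaves.card : ℝ) * (R.leaves.card : ℝ)) ≤
          φ * (cutWeight w S ((L.leaves ∪ R.leaves) \ S) /
            ((S.card : ℝ) * (((L.leaves ∪ R.leaves) \ S).card : ℝ)))) ∧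
      IsRecApproxSparsestCutTree w φ L ∧ IsRecApproxSparsestCutTree w φ R

/-- Cluster trees obtained by recursively splitting along exact sparsest cuts. -/
def IsRecSparsestCutTree [DecidableEq V] (w : V → V → ℝ) : ClusterTree V → Prop
  | ClusterTree.leaf _ => True
  | ClusterTree.node L R =>
      (∀ S : Finset V, S ⊆ L.leaves ∪ R.leaves → S.Nonempty → S ⊂ L.leaves ∪ R.leaves →
        cutWeight w L.leaves R.leaves / ((L.leaves.card : ℝ) * (R.leaves.card : ℝ)) ≤
          cutWeight w S ((L.leaves ∪ R.leaves) \ S) /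
            ((S.card : ℝ) * (((L.leaves ∪ R.leaves) \ S).card : ℝ))) ∧
      IsRecSparsestCutTree w L ∧ IsRecSparsestCutTree w R

/-- Cluster trees obtained by recursively splitting along exact densest cuts. -/
def IsRecDensestCutTree [DecidableEq V] (w : V → V → ℝ) : ClusterTree V → Prop
  | ClusterTree.leaf _ => True
  | ClusterTree.node L R =>
      (∀ S : Finset V, S ⊆ L.leaves ∪ R.leaves → S.Nonempty → S ⊂ L.leaves ∪ R.leaves →
        cutWeight w S ((L.leaves ∪ R.leaves) \ S) /
            ((S.card : ℝ) * (((L.leaves ∪ R.leaves) \ S).card : ℝ)) ≤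
          cutWeight w L.leaves R.leaves / ((L.leaves.card : ℝ) * (R.leaves.card : ℝ))) ∧
      IsRecDensestCutTree w L ∧ IsRecDensestCutTree w R

/-- Cluster trees produced by the bisection 2-Center algorithm (similarity setting). -/
def IsBisection2CenterTree [DecidableEq V] (w : V → V → ℝ) : ClusterTree V → Prop
  | ClusterTree.leaf _ => True
  | ClusterTree.node L R =>
      (∃ u ∈ L.leaves ∪ R.leaves, ∃ v ∈ L.leaves ∪ R.leaves, u ≠ v ∧
        (∃ r : ℝ,
          (∀ x ∈ L.leaves ∪ R.leaves, r ≤ max (w x u) (w x v)) ∧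
          (∀ u' ∈ L.leaves ∪ R.leaves, ∀ v' ∈ L.leaves ∪ R.leaves, u' ≠ v' →
            ∃ x ∈ L.leaves ∪ R.leaves, max (w x u') (w x v') ≤ r)) ∧
        L.leaves = (L.leaves ∪ R.leaves).filter fun x => w x v ≤ w x u) ∧
      IsBisection2CenterTree w L ∧ IsBisection2CenterTree w R

/-- Cluster trees produced by the bisection 2-Center algorithm (dissimilarity setting). -/
def IsBisection2CenterTreeDissim [DecidableEq V] (w : V → V → ℝ) : ClusterTree V → Prop
  | ClusterTree.leaf _ => True
  | ClusterTree.node L R =>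
      (∃ u ∈ L.leaves ∪ R.leaves, ∃ v ∈ L.leaves ∪ R.leaves, u ≠ v ∧
        (∃ r : ℝ,
          (∀ x ∈ L.leaves ∪ R.leaves, min (w x u) (w x v) ≤ r) ∧
          (∀ u' ∈ L.leaves ∪ R.leaves, ∀ v' ∈ L.leaves ∪ R.leaves, u' ≠ v' →
            ∃ x ∈ L.leaves ∪ R.leaves, r ≤ min (w x u') (w x v'))) ∧
        L.leaves = (L.leaves ∪ R.leaves).filter fun x => w x u ≤ w x v) ∧
      IsBisection2CenterTreeDissim w L ∧ IsBisection2CenterTreeDissim w R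

end Cuts

/-! ### Pivot algorithms -/

mutual
/-- Trees produced by the fast pivot algorithm (Algorithm 6 of CKMM):
pick a pivot `p`, split the other vertices into classes of equal similarity to `p`
(in strictly decreasing order of similarity), recurse, and attach along a spine. -/
inductive IsPivotTree {V : Type} [DecidableEq V] (w : V → V → ℝ) : ClusterTree V → Prop where
  | mk : ∀ (p : V) (T : ClusterTree V), PivotSpine w p T → IsPivotTree w T

/-- The spine of the pivot algorithm: `PivotSpine w p T` says that `T` is an iterated
union of the single-vertex tree on `p` with pivot trees of the similarity classes of
`p`, attached in strictly decreasing order of similarity to `p`. -/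
inductive PivotSpine {V : Type} [DecidableEq V] (w : V → V → ℝ) : V → ClusterTree V → Prop where
  | base : ∀ p : V, PivotSpine w p (ClusterTree.leaf p)
  | step : ∀ (p : V) (S T : ClusterTree V) (c : ℝ),
      PivotSpine w p S → IsPivotTree w T →
      (∀ v ∈ T.leaves, w p v = c) →
      (∀ u ∈ S.leaves, u ≠ p → c < w p u) →
      PivotSpine w p (ClusterTree.node S T)
end

mutual
/-- Trees produced by the robust pivot algorithm (Algorithm 7 of CKMM). -/
inductive IsRobustPivotTree {V : Type} [DecidableEq V] (w : V → V → ℝ) :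
    ClusterTree V → Prop where
  | mk : ∀ (p : V) (T : ClusterTree V), RobustPivotSpine w T.leaves p T →
      IsRobustPivotTree w T

/-- `RobustPivotSpine w U p T` : `T` is a prefix (a spine) of a run of the robust pivot
algorithm on the vertex set `U`, started at the pivot `p`.  At each step, `wi` is the
maximum weight of an edge in the cut `(Ṽ, U \ Ṽ)` (where `Ṽ` is the set of already
clustered vertices), and the next block is the least subset of `U \ Ṽ` closed under
adding any vertex having an edge of weight at least `wi` into the block or into `Ṽ`. -/
inductive RobustPivotSpine {V : Type} [DecidableEq V] (w : V → V → ℝ) :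
    Finset V → V → ClusterTree V → Prop where
  | base : ∀ (U : Finset V) (p : V), RobustPivotSpine w U p (ClusterTree.leaf p)
  | step : ∀ (U : Finset V) (p : V) (S T : ClusterTree V) (wi : ℝ),
      RobustPivotSpine w U p S →
      IsRobustPivotTree w T →
      (∃ p1 ∈ S.leaves, ∃ p2 ∈ U \ S.leaves, w p1 p2 = wi) →
      (∀ q1 ∈ S.leaves, ∀ q2 ∈ U \ S.leaves, w q1 q2 ≤ wi) →
      T.leaves ⊆ U \ S.leaves →
      (∀ u ∈ U \ S.leaves, (∃ v ∈ T.leaves ∪ S.leaves, wi ≤ w u v) → u ∈ T.leaves) →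
      (∀ C : Finset V, C ⊆ U \ S.leaves →
        (∀ u ∈ U \ S.leaves, (∃ v ∈ C ∪ S.leaves, wi ≤ w u v) → u ∈ C) →
        T.leaves ⊆ C) →
      RobustPivotSpine w U p (ClusterTree.node S T)
end

/-! ### Paths and caterpillars -/

/-- Attach the leaves from the list `l` one by one on top of `t` (a "spine"). -/
def spineTree {V : Type} : ClusterTree V → List V → ClusterTree V
  | t, [] => t
  | t, v :: vs => spineTree (ClusterTree.node t (ClusterTree.leaf v)) vs

/-- The unit-weight path on `n` vertices. -/
def pathW (n : ℕ) (i j : Fin n) : ℝ :=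
  if (i : ℕ) + 1 = (j : ℕ) ∨ (j : ℕ) + 1 = (i : ℕ) then 1 else 0

/-! ### Random graphs: hierarchical stochastic block model -/

/-- Index set for the potential edges of a graph on `Fin n`. -/
abbrev EdgeIdx (n : ℕ) := {p : Fin n × Fin n // p.1 < p.2}

/-- The (0/1) weight function of the random graph described by the edge
configuration `c`. -/
def configW {n : ℕ} (c : EdgeIdx n → Bool) (u v : Fin n) : ℝ :=
  if h : u < v then (if c ⟨(u, v), h⟩ then 1 else 0)
  else if h' : v < u then (if c ⟨(v, u), h'⟩ then 1 else 0)
  else 0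

/-- The probability of the edge configuration `c` when each edge `e` is present
independently with probability `q e`. -/
def configProb {n : ℕ} (q : Fin n → Fin n → ℝ) (c : EdgeIdx n → Bool) : ℝ :=
  ∏ e : EdgeIdx n, if c e then q e.val.1 e.val.2 else 1 - q e.val.1 e.val.2

/-- The expected cost `E[Γ(T) | ψ]` of a fixed cluster tree `T`, over the random
choice of the edges (with edge probabilities `q`). -/
def expectedCost {n : ℕ} (g : ℕ → ℕ → ℝ) (q : Fin n → Fin n → ℝ)
    (T : ClusterTree (Fin n)) : ℝ :=
  ∑ c : EdgeIdx n → Bool, configProb q c * treeCost (configW c) g T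

/-- The (fixed, size-independent) data of a hierarchical stochastic block model with
`k` bottom-level clusters: a generating tree `Ttil` with weights `Wtil` in `(0,1)`
(the graph `G̃ₖ` on `k` vertices generated from an ultrametric), and intra-cluster
probabilities `p i ∈ (0,1]` exceeding the weight of the parent of leaf `i`. -/
structure HSBM (k : ℕ) where
  Ttil : ClusterTree (Fin k)
  Wtil : ClusterTree (Fin k) → ℝ
  p : Fin k → ℝ
  ttil_isClusterTree : IsClusterTree Ttil
  wtil_pos : ∀ L R, IsSubtreeOf (ClusterTree.node L R) Ttil →
    0 < Wtil (ClusterTree.node L R)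
  wtil_lt_one : ∀ L R, IsSubtreeOf (ClusterTree.node L R) Ttil →
    Wtil (ClusterTree.node L R) < 1
  wtil_mono : ∀ L R, IsSubtreeOf (ClusterTree.node L R) Ttil →
    ∀ s, IsSubtreeOf s L ∨ IsSubtreeOf s R → Wtil (ClusterTree.node L R) ≤ Wtil s
  p_pos : ∀ i, 0 < p i
  p_le_one : ∀ i, p i ≤ 1
  p_gt_parent : ∀ L R, IsSubtreeOf (ClusterTree.node L R) Ttil →
    ∀ i : Fin k, L = ClusterTree.leaf i ∨ R = ClusterTree.leaf i →
      Wtil (ClusterTree.node L R) < p i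

/-- The edge probabilities of the HSBM `M` with sparsity `α`, given the assignment
`ψ` of vertices to bottom-level clusters.  These are also the edge weights of the
expected graph `Ḡ`. -/
def HSBM.edgeProb {k : ℕ} (M : HSBM k) (α : ℝ) {n : ℕ} (ψ : Fin n → Fin k) :
    Fin n → Fin n → ℝ := fun u v =>
  if ψ u = ψ v then α * M.p (ψ u)
  else α * M.Wtil (lcaSubtree M.Ttil (ψ u) (ψ v))

/-- The probability of the sample `ω = (ψ, c)` (labels and edges) of the HSBM `M`
with label proportions `f` and sparsity `α`. -/
def hsbmProb {k : ℕ} (M : HSBM k) (f : Fin k → ℝ) (α : ℝ) {n : ℕ}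
    (ω : (Fin n → Fin k) × (EdgeIdx n → Bool)) : ℝ :=
  (∏ v : Fin n, f (ω.1 v)) * configProb (M.edgeProb α ω.1) ω.2

/-- The common cost `κ(n)` of all cluster trees of the unit-weight clique on `n`
vertices (computed on the caterpillar tree). -/
def cliqueTreeCost (g : ℕ → ℕ → ℝ) (n : ℕ) : ℝ :=
  ∑ i ∈ Finset.range n, (i : ℝ) * g i 1

/-- The smoothness property: `max {g(n₁,n₂) : n₁+n₂ = n} = O(κ(n)/n²)`. -/
def SmoothCost (g : ℕ → ℕ → ℝ) : Prop :=
  ∃ C : ℝ, 0 < C ∧ ∀ n1 n2 : ℕ, 1 ≤ n1 → 1 ≤ n2 →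
    g n1 n2 * (((n1 + n2 : ℕ) : ℝ)) ^ 2 ≤ C * cliqueTreeCost g (n1 + n2)

end


/-!
Sufficiency. Let `t` be the lightest weight of an edge inside a vertex set `S`. By the ultrametric
inequality, "equal or joined by an edge heavier than `t`" is an equivalence relation on `S` whose
classes (blocks) are proper subsets, and on distinct pairs `w = t + ∑_B (w - t)·[B]`. By condition
(1) the clique part costs the same for every tree. The cost of `(w - t)·[B]` can only drop when the
tree is restricted to `B`, and it stays the same only if `B` already spans a subtree: otherwise
some node whose children both meet `B` pays `g` of its full child sizes, which is strictly larger
by (2) and (3). By induction on `|S|`, the minimal cost is therefore attained exactly by the trees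
in which every block spans an optimal subtree, and these are the generating trees.

Necessity. Every tree of a unit clique is generating, which gives (1). Comparing a caterpillar
with the join of two caterpillars gives the recursion `κ(a + b) = a b g(a, b) + κ(a) + κ(b)` for
the clique cost `κ`; it is symmetric in `a` and `b`, which gives (2). Finally, on two clusters
`A ∪ B` with all weights `2` plus a vertex `z` at weight `1`, the generating tree `((A, B), z)` must
be cheaper than `((A, z), B)`, and the recursion turns this into `g(|A|, |B|) < g(|A| + 1, |B|)`.
-/

open Finset

namespace ClusterTree

variable {V : Type} [DecidableEq V]

@[simp] theorem leaves_leaf (v : V) : (leaf v).leaves = {v} := by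
  simp [leaves, leavesList]

@[simp] theorem leaves_node (L R : ClusterTree V) :
    (node L R).leaves = L.leaves ∪ R.leaves := by
  simp [leaves, leavesList]

theorem mem_leaves {T : ClusterTree V} {x : V} : x ∈ T.leaves ↔ x ∈ T.leavesList :=
  List.mem_toFinset

theorem leaves_nonempty : ∀ T : ClusterTree V, T.leaves.Nonempty
  | leaf v => by simp
  | node L _ => by simpa using Or.inl (leaves_nonempty L)

theorem nodup_node_iff {L R : ClusterTree V} :
    (node L R).leavesList.Nodup ↔
      L.leavesList.Nodup ∧ R.leavesList.Nodup ∧ Disjoint L.leaves R.leaves := by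
  simp only [leavesList, List.nodup_append, Finset.disjoint_left, mem_leaves]
  grind

theorem card_leaves_node {L R : ClusterTree V} (h : (node L R).leavesList.Nodup) :
    (node L R).leaves.card = L.leaves.card + R.leaves.card := by
  rw [leaves_node, card_union_of_disjoint (nodup_node_iff.1 h).2.2]

theorem card_leaves {T : ClusterTree V} (hT : T.leavesList.Nodup) :
    T.leaves.card = T.leavesList.length :=
  List.toFinset_card_of_nodup hT

theorem eq_leaf_of_leaves_eq_singleton {T : ClusterTree V} (hT : T.leavesList.Nodup) {v : V}
    (h : T.leaves = {v}) : T = leaf v := by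
  cases T with
  | leaf u => simpa using h
  | node L R =>
    have := congrArg card h
    rw [card_leaves_node hT, card_singleton] at this
    have := (leaves_nonempty L).card_pos
    have := (leaves_nonempty R).card_pos
    omega

end ClusterTree

open ClusterTree

section Subtrees

variable {V : Type}

@[simp] theorem isSubtreeOf_leaf {s : ClusterTree V} {v : V} :
    IsSubtreeOf s (leaf v) ↔ s = leaf v := Iff.rfl

@[simp] theorem isSubtreeOf_node {s L R : ClusterTree V} :
    IsSubtreeOf s (node L R) ↔ s = node L R ∨ IsSubtreeOf s L ∨ IsSubtreeOf s R := Iff.rfl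

theorem isSubtreeOf_refl : ∀ T : ClusterTree V, IsSubtreeOf T T
  | leaf _ => rfl
  | node _ _ => Or.inl rfl

theorem isSubtreeOf_node_left (L R : ClusterTree V) : IsSubtreeOf L (node L R) :=
  Or.inr (Or.inl (isSubtreeOf_refl L))

theorem isSubtreeOf_node_right (L R : ClusterTree V) : IsSubtreeOf R (node L R) :=
  Or.inr (Or.inr (isSubtreeOf_refl R))

theorem IsSubtreeOf.trans {a b c : ClusterTree V} (hab : IsSubtreeOf a b)
    (hbc : IsSubtreeOf b c) : IsSubtreeOf a c := by
  induction c with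
  | leaf v => rwa [isSubtreeOf_leaf.1 hbc] at hab
  | node L R ihL ihR =>
    rcases hbc with rfl | h | h
    · exact hab
    · exact Or.inr (Or.inl (ihL h))
    · exact Or.inr (Or.inr (ihR h))

theorem leavesList_spineTree (t : ClusterTree V) (l : List V) :
    (spineTree t l).leavesList = t.leavesList ++ l := by
  induction l generalizing t with
  | nil => simp [spineTree]
  | cons v vs ih => simp [spineTree, ih, leavesList]

theorem exists_leavesList_eq {l : List V} (hl : l ≠ []) :
    ∃ T : ClusterTree V, T.leavesList = l := by
  obtain ⟨v, vs, rfl⟩ := List.exists_cons_of_ne_nil hl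
  exact ⟨spineTree (leaf v) vs, by simp [leavesList_spineTree, leavesList]⟩

variable [DecidableEq V]

theorem IsSubtreeOf.leaves_subset {s T : ClusterTree V} (h : IsSubtreeOf s T) :
    s.leaves ⊆ T.leaves := by
  induction T with
  | leaf v => rw [isSubtreeOf_leaf.1 h]
  | node L R ihL ihR =>
    rcases h with rfl | h | h
    · exact subset_rfl
    · exact (ihL h).trans (by simp)
    · exact (ihR h).trans (by simp)

theorem IsSubtreeOf.nodup {s T : ClusterTree V} (h : IsSubtreeOf s T)
    (hT : T.leavesList.Nodup) : s.leavesList.Nodup := by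
  induction T with
  | leaf v => rwa [isSubtreeOf_leaf.1 h]
  | node L R ihL ihR =>
    obtain ⟨hL, hR, -⟩ := nodup_node_iff.1 hT
    rcases h with rfl | h | h
    exacts [hT, ihL h hL, ihR h hR]

theorem IsSubtreeOf.eq_of_leaves_eq {s T : ClusterTree V} (h : IsSubtreeOf s T)
    (hT : T.leavesList.Nodup) (hs : s.leaves = T.leaves) : s = T := by
  cases T with
  | leaf v => exact h
  | node L R =>
    obtain ⟨-, -, hLR⟩ := nodup_node_iff.1 hT
    obtain ⟨l, hl⟩ := L.leaves_nonempty
    obtain ⟨r, hr⟩ := R.leaves_nonempty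
    rcases h with h | h | h
    · exact h
    · have := h.leaves_subset (hs ▸ (by simp [hr] : r ∈ (node L R).leaves))
      exact absurd hr (disjoint_left.1 hLR this)
    · have := h.leaves_subset (hs ▸ (by simp [hl] : l ∈ (node L R).leaves))
      exact absurd this (disjoint_left.1 hLR hl)

end Subtrees

section Costs

variable {V : Type}

theorem cutWeight_const {w : V → V → ℝ} {A B : Finset V} {c : ℝ}
    (h : ∀ x ∈ A, ∀ y ∈ B, w x y = c) : cutWeight w A B = A.card * B.card * c := by
  rw [cutWeight, sum_congr rfl fun x hx => sum_congr rfl (h x hx)]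
  simp [mul_assoc]

theorem cutWeight_sum {ι : Type*} (s : Finset ι) (u : ι → V → V → ℝ) (A B : Finset V) :
    cutWeight (fun x y => ∑ i ∈ s, u i x y) A B = ∑ i ∈ s, cutWeight (u i) A B := by
  unfold cutWeight
  exact (sum_congr rfl fun _ _ => sum_comm).trans sum_comm

theorem cutWeight_pos {u : V → V → ℝ} (hu : ∀ x y, 0 ≤ u x y) {X Y : Finset V} {a b : V}
    (ha : a ∈ X) (hb : b ∈ Y) (h : 0 < u a b) : 0 < cutWeight u X Y :=
  sum_pos' (fun x _ => sum_nonneg fun y _ => hu x y)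
    ⟨a, ha, sum_pos' (fun y _ => hu a y) ⟨b, hb, h⟩⟩

theorem cutWeight_eq_zero_of_disjoint_left {u : V → V → ℝ} {A : Finset V}
    (hu : ∀ x y, u x y ≠ 0 → x ∈ A ∧ y ∈ A) {X : Finset V} (hX : Disjoint X A) (Y : Finset V) :
    cutWeight u X Y = 0 :=
  sum_eq_zero fun x hx => sum_eq_zero fun y _ => by_contra fun h =>
    disjoint_left.1 hX hx (hu x y h).1

theorem cutWeight_eq_zero_of_disjoint_right {u : V → V → ℝ} {A : Finset V}
    (hu : ∀ x y, u x y ≠ 0 → x ∈ A ∧ y ∈ A) (X : Finset V) {Y : Finset V} (hY : Disjoint Y A) :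
    cutWeight u X Y = 0 :=
  sum_eq_zero fun x _ => sum_eq_zero fun y hy => by_contra fun h =>
    disjoint_left.1 hY hy (hu x y h).2

variable [DecidableEq V]

theorem cutWeight_union_left (w : V → V → ℝ) {A B : Finset V} (C : Finset V)
    (h : Disjoint A B) : cutWeight w (A ∪ B) C = cutWeight w A C + cutWeight w B C :=
  sum_union h

theorem cutWeight_inter {u : V → V → ℝ} {A : Finset V}
    (hu : ∀ x y, u x y ≠ 0 → x ∈ A ∧ y ∈ A) (X Y : Finset V) :
    cutWeight u (X ∩ A) (Y ∩ A) = cutWeight u X Y := by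
  unfold cutWeight
  refine sum_subset inter_subset_left (fun x _ hx => ?_) |>.trans
    (sum_congr rfl fun x _ => sum_subset inter_subset_left fun y hy hyA => ?_)
  · refine sum_eq_zero fun y _ => by_contra fun h => hx ?_
    exact mem_inter.2 ⟨by assumption, (hu x y h).1⟩
  · exact by_contra fun h => hyA (mem_inter.2 ⟨hy, (hu x y h).2⟩)

theorem treeCost_congr {w w' : V → V → ℝ} {g : ℕ → ℕ → ℝ} {T : ClusterTree V}
    (hT : T.leavesList.Nodup) (h : ∀ x ∈ T.leaves, ∀ y ∈ T.leaves, x ≠ y → w x y = w' x y) :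
    treeCost w g T = treeCost w' g T := by
  induction T with
  | leaf v => rfl
  | node L R ihL ihR =>
    obtain ⟨hL, hR, hLR⟩ := nodup_node_iff.1 hT
    simp only [leaves_node, mem_union] at h
    have hcut : cutWeight w L.leaves R.leaves = cutWeight w' L.leaves R.leaves :=
      sum_congr rfl fun x hx => sum_congr rfl fun y hy =>
        h x (.inl hx) y (.inr hy) fun hxy => disjoint_left.1 hLR hx (hxy ▸ hy)
    rw [treeCost, treeCost, hcut, ihL hL fun x hx y hy => h x (.inl hx) y (.inl hy),
      ihR hR fun x hx y hy => h x (.inr hx) y (.inr hy)]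

theorem treeCost_eq_zero_of_disjoint {u : V → V → ℝ} {g : ℕ → ℕ → ℝ} {A : Finset V}
    (hu : ∀ x y, u x y ≠ 0 → x ∈ A ∧ y ∈ A) {T : ClusterTree V} (hT : Disjoint T.leaves A) :
    treeCost u g T = 0 := by
  induction T with
  | leaf v => rfl
  | node L R ihL ihR =>
    rw [leaves_node, disjoint_union_left] at hT
    rw [treeCost, cutWeight_eq_zero_of_disjoint_left hu hT.1, ihL hT.1, ihR hT.2]
    ring

theorem treeCost_add (w w' : V → V → ℝ) (g : ℕ → ℕ → ℝ) (T : ClusterTree V) :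
    treeCost (fun x y => w x y + w' x y) g T = treeCost w g T + treeCost w' g T := by
  induction T with
  | leaf v => simp [treeCost]
  | node L R ihL ihR =>
    simp only [treeCost, ihL, ihR, cutWeight, sum_add_distrib]
    ring

theorem treeCost_const_mul (c : ℝ) (w : V → V → ℝ) (g : ℕ → ℕ → ℝ) (T : ClusterTree V) :
    treeCost (fun x y => c * w x y) g T = c * treeCost w g T := by
  induction T with
  | leaf v => simp [treeCost]
  | node L R ihL ihR =>
    simp only [treeCost, ihL, ihR, cutWeight, ← mul_sum]
    ring

theorem treeCost_sum {ι : Type*} (s : Finset ι) (u : ι → V → V → ℝ) (g : ℕ → ℕ → ℝ)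
    (T : ClusterTree V) :
    treeCost (fun x y => ∑ i ∈ s, u i x y) g T = ∑ i ∈ s, treeCost (u i) g T := by
  induction T with
  | leaf v => simp [treeCost]
  | node L R ihL ihR =>
    simp only [treeCost, ihL, ihR, cutWeight_sum, sum_add_distrib, sum_mul]

theorem treeCost_eq_of_isSubtreeOf {u : V → V → ℝ} {g : ℕ → ℕ → ℝ} {N T : ClusterTree V}
    (hN : IsSubtreeOf N T) (hT : T.leavesList.Nodup)
    (hu : ∀ x y, u x y ≠ 0 → x ∈ N.leaves ∧ y ∈ N.leaves) :
    treeCost u g T = treeCost u g N := by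
  induction T with
  | leaf v => rw [isSubtreeOf_leaf.1 hN]
  | node L R ihL ihR =>
    obtain ⟨hL, hR, hLR⟩ := nodup_node_iff.1 hT
    rcases hN with rfl | hN | hN
    · rfl
    · have hRN : Disjoint R.leaves N.leaves := hLR.symm.mono_right hN.leaves_subset
      rw [treeCost, ihL hN hL, cutWeight_eq_zero_of_disjoint_right hu _ hRN,
        treeCost_eq_zero_of_disjoint hu hRN]
      ring
    · have hLN : Disjoint L.leaves N.leaves := hLR.mono_right hN.leaves_subset
      rw [treeCost, ihR hN hR, cutWeight_eq_zero_of_disjoint_left hu hLN,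
        treeCost_eq_zero_of_disjoint hu hLN]
      ring

end Costs

section Clique

variable {V : Type} [DecidableEq V] {g : ℕ → ℕ → ℝ}

def CliqueCostSplits (g : ℕ → ℕ → ℝ) : Prop :=
  ∀ a b : ℕ, 1 ≤ a → 1 ≤ b →
    cliqueTreeCost g (a + b) = a * b * g a b + cliqueTreeCost g a + cliqueTreeCost g b

theorem cutWeight_cliqueW {A B : Finset V} (h : Disjoint A B) :
    cutWeight (cliqueW V) A B = A.card * B.card := by
  refine (cutWeight_const (c := 1) fun x hx y hy => ?_).trans (mul_one _)
  rw [cliqueW, if_neg]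
  rintro rfl
  exact disjoint_left.1 h hx hy

theorem treeCost_cliqueW (hg : CliqueCostSplits g) {T : ClusterTree V}
    (hT : T.leavesList.Nodup) : treeCost (cliqueW V) g T = cliqueTreeCost g T.leaves.card := by
  induction T with
  | leaf v => simp [treeCost, cliqueTreeCost]
  | node L R ihL ihR =>
    obtain ⟨hL, hR, hLR⟩ := nodup_node_iff.1 hT
    rw [treeCost, cutWeight_cliqueW hLR, ihL hL, ihR hR, card_leaves_node hT,
      hg _ _ L.leaves_nonempty.card_pos R.leaves_nonempty.card_pos]

theorem CliqueCostSplits.symm (hg : CliqueCostSplits g) {a b : ℕ} (ha : 1 ≤ a) (hb : 1 ≤ b) :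
    g a b = g b a := by
  have h := hg b a hb ha
  rw [add_comm, hg a b ha hb, mul_comm (b : ℝ)] at h
  have hab : (0 : ℝ) < a * b := by positivity
  exact mul_left_cancel₀ hab.ne' (by linarith)

theorem treeCost_spineTree_cliqueW (g : ℕ → ℕ → ℝ) (t : ClusterTree V) (l : List V)
    (h : (t.leavesList ++ l).Nodup) :
    treeCost (cliqueW V) g (spineTree t l) + cliqueTreeCost g t.leaves.card =
      treeCost (cliqueW V) g t + cliqueTreeCost g (t.leaves.card + l.length) := by
  induction l generalizing t with
  | nil => simp [spineTree]
  | cons v vs ih =>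
    have hv : v ∉ t.leaves := fun hv =>
      (List.nodup_append.1 h).2.2 v (mem_leaves.1 hv) v List.mem_cons_self rfl
    have hcard : (node t (leaf v)).leaves.card = t.leaves.card + 1 := by
      rw [leaves_node, leaves_leaf, card_union_of_disjoint (disjoint_singleton_right.2 hv),
        card_singleton]
    have hcost : treeCost (cliqueW V) g (node t (leaf v)) =
        t.leaves.card * g t.leaves.card 1 + treeCost (cliqueW V) g t := by
      rw [treeCost, cutWeight_cliqueW (by simpa using hv)]
      simp [treeCost]
    have hκ : cliqueTreeCost g (t.leaves.card + 1) =
        cliqueTreeCost g t.leaves.card + t.leaves.card * g t.leaves.card 1 := by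
      simp [cliqueTreeCost, sum_range_succ]
    have := ih (node t (leaf v)) (by simpa [leavesList] using h)
    rw [hcard, hcost, hκ, add_right_comm, ← add_assoc] at this
    rw [spineTree, List.length_cons, ← add_assoc, add_right_comm]
    linarith

theorem exists_leavesList_eq_treeCost_cliqueW (g : ℕ → ℕ → ℝ) {l : List V} (hl : l ≠ [])
    (hnd : l.Nodup) :
    ∃ T : ClusterTree V, T.leavesList = l ∧
      treeCost (cliqueW V) g T = cliqueTreeCost g l.length := by
  obtain ⟨v, vs, rfl⟩ := List.exists_cons_of_ne_nil hl
  refine ⟨spineTree (leaf v) vs, by simp [leavesList_spineTree, leavesList], ?_⟩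
  have := treeCost_spineTree_cliqueW g (leaf v) vs (by simpa [leavesList] using hnd)
  simp only [leaves_leaf, card_singleton, add_comm 1] at this
  simp [cliqueTreeCost, treeCost] at this ⊢
  linarith

end Clique

theorem strictMonoOn_uncurry_of_symm_of_lt_succ {g : ℕ → ℕ → ℝ}
    (hsymm : ∀ n1 n2 : ℕ, 1 ≤ n1 → 1 ≤ n2 → g n1 n2 = g n2 n1)
    (hlt : ∀ n1 n2 : ℕ, 1 ≤ n1 → 1 ≤ n2 → g n1 n2 < g (n1 + 1) n2) :
    StrictMonoOn (Function.uncurry g) {p | 1 ≤ p.1 ∧ 1 ≤ p.2} := by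
  have hfst : ∀ b, 1 ≤ b → StrictMonoOn (g · b) (Set.Ici 1) := fun b hb =>
    strictMonoOn_of_lt_succ Set.ordConnected_Ici fun a _ ha _ => by simpa using hlt a b ha hb
  have hsnd : ∀ a, 1 ≤ a → StrictMonoOn (g a ·) (Set.Ici 1) := fun a ha b hb b' hb' h => by
    simpa only [hsymm a b ha hb, hsymm a b' ha hb'] using hfst a ha hb hb' h
  rintro ⟨a, b⟩ ⟨ha, hb⟩ ⟨a', b'⟩ ⟨ha', hb'⟩ h
  rcases Prod.lt_iff.1 h with ⟨h1, h2⟩ | ⟨h1, h2⟩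
  · exact (hfst b hb ha ha' h1).trans_le ((hsnd a' ha').monotoneOn hb hb' h2)
  · exact ((hfst b hb).monotoneOn ha ha' h1).trans_lt (hsnd a' ha' hb hb' h2)


section Ultrametric

variable {V : Type} {w : V → V → ℝ}

/-- As in `GeneratedFromUltrametric`, the diagonal of `w` is left unconstrained. -/
structure IsUltrametricSimilarity (w : V → V → ℝ) : Prop where
  nonneg : ∀ x y, x ≠ y → 0 ≤ w x y
  symm : ∀ x y, w x y = w y x
  min_le : ∀ x y z, x ≠ y → y ≠ z → x ≠ z → min (w x y) (w y z) ≤ w x z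

theorem isUltrametricSimilarity_of_generatedFromUltrametric (h : GeneratedFromUltrametric w) :
    IsUltrametricSimilarity w := by
  obtain ⟨d, f, ⟨-, -, hdsymm, hdnn, hdult⟩, hf, hf0, hwf⟩ := h
  refine ⟨fun x y hxy => hwf x y hxy ▸ hf0 _ (hdnn x y), fun x y => ?_,
    fun x y z hxy hyz hxz => ?_⟩
  · rcases eq_or_ne x y with rfl | hxy
    · rfl
    · rw [hwf x y hxy, hwf y x hxy.symm, hdsymm]
  · have hd := hdult x z y
    rw [hdsymm z y] at hd
    rw [hwf x y hxy, hwf y z hyz, hwf x z hxz]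
    rcases le_total (d x y) (d y z) with h | h
    · exact (min_le_right _ _).trans (hf _ _ (hdnn x z) (hd.trans_eq (max_eq_right h)))
    · exact (min_le_left _ _).trans (hf _ _ (hdnn x z) (hd.trans_eq (max_eq_left h)))

/-- The ultrametric is `C + 1 - w` off the diagonal, for some `C ≥ max w`, and
`f s = max (C + 1 - s) 0`, which is injective on the distances that occur. -/
theorem generatedFromMinimalUltrametric_of_isUltrametricSimilarity [Fintype V]
    (hw : IsUltrametricSimilarity w) : GeneratedFromMinimalUltrametric w := by
  classical
  obtain ⟨C, hC⟩ := exists_le (insert 0 (univ.image fun p : V × V => w p.1 p.2))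
  have hC0 : 0 ≤ C := hC 0 (mem_insert_self _ _)
  have hwC : ∀ x y, w x y ≤ C := fun x y =>
    hC _ (mem_insert_of_mem (mem_image_of_mem (fun p : V × V => w p.1 p.2) (mem_univ (x, y))))
  let d : V → V → ℝ := fun x y => if x = y then 0 else C + 1 - w x y
  have hd : ∀ x y, x ≠ y → d x y = C + 1 - w x y := fun x y hxy => if_neg hxy
  have hdpos : ∀ x y, x ≠ y → 0 < d x y := fun x y hxy => by
    rw [hd x y hxy]; linarith [hwC x y]
  have hdnn : ∀ x y, 0 ≤ d x y := fun x y => by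
    rcases eq_or_ne x y with rfl | hxy
    exacts [(if_pos rfl).ge, (hdpos x y hxy).le]
  refine ⟨d, fun s => max (C + 1 - s) 0, ⟨fun x => if_pos rfl, fun x y h => ?_, fun x y => ?_,
    hdnn, fun x y z => ?_⟩, fun a b _ hab => max_le_max (by linarith) le_rfl,
    fun a _ => le_max_right _ _, fun x y hxy => ?_, fun u v u' v' huv hu'v' h => ?_⟩
  · by_contra hxy
    exact (hdpos x y hxy).ne' h
  · rcases eq_or_ne x y with rfl | hxy
    · rfl
    · rw [hd x y hxy, hd y x hxy.symm, hw.symm]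
  · rcases eq_or_ne x y with rfl | hxy
    · exact (if_pos rfl).trans_le (le_max_of_le_left (hdnn x z))
    rcases eq_or_ne x z with rfl | hxz
    · rw [show d y x = d x y by rw [hd x y hxy, hd y x hxy.symm, hw.symm]]
      exact le_max_right _ _
    rcases eq_or_ne y z with rfl | hyz
    · exact le_max_left _ _
    rw [hd x y hxy, hd x z hxz, hd y z hyz]
    have := hw.min_le x z y hxz hyz.symm hxy
    rw [hw.symm z y] at this
    rcases min_choice (w x z) (w y z) with h | h <;> rw [h] at this
    · exact le_max_of_le_left (by linarith)
    · exact le_max_of_le_right (by linarith)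
  · simp only [hd x y hxy, sub_sub_cancel, max_eq_left (hw.nonneg x y hxy)]
  · simp only [hd u v huv, hd u' v' hu'v', sub_sub_cancel,
      max_eq_left (hw.nonneg _ _ huv), max_eq_left (hw.nonneg _ _ hu'v')] at h ⊢
    rw [h]

end Ultrametric

section Hierarchical

variable {V : Type} [DecidableEq V] {w : V → V → ℝ}

def IsHierarchical (w : V → V → ℝ) : ClusterTree V → Prop
  | leaf _ => True
  | node L R =>
    (∀ x ∈ L.leaves, ∀ y ∈ R.leaves, ∀ u ∈ L.leaves ∪ R.leaves, ∀ v ∈ L.leaves ∪ R.leaves,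
      u ≠ v → w x y ≤ w u v) ∧ IsHierarchical w L ∧ IsHierarchical w R

theorem IsHierarchical.of_isSubtreeOf {s T : ClusterTree V} (hT : IsHierarchical w T)
    (h : IsSubtreeOf s T) : IsHierarchical w s := by
  induction T with
  | leaf v => rwa [isSubtreeOf_leaf.1 h]
  | node L R ihL ihR =>
    rcases h with rfl | h | h
    exacts [hT, ihL hT.2.1 h, ihR hT.2.2 h]

theorem IsHierarchical.cross_eq {L R : ClusterTree V} (h : IsHierarchical w (node L R))
    (hnd : (node L R).leavesList.Nodup) {x x' y y' : V} (hx : x ∈ L.leaves)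
    (hx' : x' ∈ L.leaves) (hy : y ∈ R.leaves) (hy' : y' ∈ R.leaves) : w x y = w x' y' := by
  have hLR := (nodup_node_iff.1 hnd).2.2
  have hne : ∀ {a b}, a ∈ L.leaves → b ∈ R.leaves → a ≠ b := fun ha hb hab =>
    disjoint_left.1 hLR ha (hab ▸ hb)
  exact le_antisymm (h.1 x hx y hy x' (mem_union_left _ hx') y' (mem_union_right _ hy')
    (hne hx' hy')) (h.1 x' hx' y' hy' x (mem_union_left _ hx) y (mem_union_right _ hy) (hne hx hy))

theorem lcaSubtree_isSubtreeOf (T : ClusterTree V) (x y : V) :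
    IsSubtreeOf (lcaSubtree T x y) T := by
  induction T with
  | leaf v => rfl
  | node L R ihL ihR =>
    rw [lcaSubtree]
    split_ifs
    exacts [Or.inr (Or.inl ihL), Or.inr (Or.inr ihR), Or.inl rfl]

theorem lcaSubtree_node_eq_or (L R : ClusterTree V) (x y : V) :
    lcaSubtree (node L R) x y = node L R ∨ IsSubtreeOf (lcaSubtree (node L R) x y) L ∨
      IsSubtreeOf (lcaSubtree (node L R) x y) R := by
  rw [lcaSubtree]
  split_ifs
  exacts [Or.inr (Or.inl (lcaSubtree_isSubtreeOf L x y)),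
    Or.inr (Or.inr (lcaSubtree_isSubtreeOf R x y)), Or.inl rfl]

theorem lcaSubtree_node_of_mem_left {L R : ClusterTree V} {x y : V} (hx : x ∈ L.leaves)
    (hy : y ∈ L.leaves) : lcaSubtree (node L R) x y = lcaSubtree L x y :=
  if_pos ⟨hx, hy⟩

theorem lcaSubtree_node_of_mem_right {L R : ClusterTree V} (hLR : Disjoint L.leaves R.leaves)
    {x y : V} (hx : x ∈ R.leaves) (hy : y ∈ R.leaves) :
    lcaSubtree (node L R) x y = lcaSubtree R x y := by
  rw [lcaSubtree, if_neg fun h => disjoint_left.1 hLR h.1 hx, if_pos ⟨hx, hy⟩]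

theorem lcaSubtree_node_of_mem_of_mem {L R : ClusterTree V} (hLR : Disjoint L.leaves R.leaves)
    {x y : V} (hx : x ∈ L.leaves) (hy : y ∈ R.leaves) :
    lcaSubtree (node L R) x y = node L R ∧ lcaSubtree (node L R) y x = node L R := by
  simp only [lcaSubtree]
  constructor <;> split_ifs with h h' <;>
    first | rfl | exact absurd hy (disjoint_left.1 hLR (by tauto)) |
      exact absurd (by tauto : x ∈ R.leaves) (disjoint_left.1 hLR hx)

theorem isHierarchical_of_isGenerating {T : ClusterTree V} (hT : T.leavesList.Nodup)
    (h : IsGenerating w T) : IsHierarchical w T := by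
  induction T with
  | leaf v => trivial
  | node L R ihL ihR =>
    obtain ⟨W, hW0, hWmono, hWlca⟩ := h
    obtain ⟨hL, hR, hLR⟩ := nodup_node_iff.1 hT
    have hsub : ∀ {s}, IsSubtreeOf s L ∨ IsSubtreeOf s R → IsSubtreeOf s (node L R) :=
      fun h => Or.inr h
    refine ⟨fun x hx y hy u hu v hv huv => ?_, ihL hL ⟨W, fun s hs => hW0 s (hsub (.inl hs)),
      fun A B hAB => hWmono A B (hsub (.inl hAB)), fun x y hx hy hxy => ?_⟩,
      ihR hR ⟨W, fun s hs => hW0 s (hsub (.inr hs)),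
      fun A B hAB => hWmono A B (hsub (.inr hAB)), fun x y hx hy hxy => ?_⟩⟩
    · rw [hWlca x y (by simp [hx]) (by simp [hy]) fun h => disjoint_left.1 hLR hx (h ▸ hy),
        (lcaSubtree_node_of_mem_of_mem hLR hx hy).1, hWlca u v (by simpa using hu)
        (by simpa using hv) huv]
      rcases lcaSubtree_node_eq_or L R u v with h | h
      · rw [h]
      · exact hWmono L R (isSubtreeOf_refl _) _ h
    · rw [hWlca x y (by simp [hx]) (by simp [hy]) hxy, lcaSubtree_node_of_mem_left hx hy]
    · rw [hWlca x y (by simp [hx]) (by simp [hy]) hxy, lcaSubtree_node_of_mem_right hLR hx hy]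

theorem isGenerating_of_isHierarchical (hw0 : ∀ x y, x ≠ y → 0 ≤ w x y)
    (hsymm : ∀ x y, w x y = w y x) {T : ClusterTree V} (hT : T.leavesList.Nodup)
    (h : IsHierarchical w T) : IsGenerating w T := by
  obtain ⟨M, hM⟩ := exists_le (insert 0 ((T.leaves ×ˢ T.leaves).image fun p => w p.1 p.2))
  have hM0 : 0 ≤ M := hM 0 (mem_insert_self _ _)
  have hwM : ∀ x ∈ T.leaves, ∀ y ∈ T.leaves, w x y ≤ M := fun x hx y hy =>
    hM _ (mem_insert_of_mem (mem_image_of_mem (fun p => w p.1 p.2) (a := (x, y))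
      (mem_product.2 ⟨hx, hy⟩)))
  let W : ClusterTree V → ℝ := fun s => match s with
    | leaf _ => M
    | node A B => w (leaves_nonempty A).choose (leaves_nonempty B).choose
  have hW : ∀ {A B}, IsSubtreeOf (node A B) T → ∀ x ∈ A.leaves, ∀ y ∈ B.leaves,
      W (node A B) = w x y := fun {A B} hAB x hx y hy =>
    (h.of_isSubtreeOf hAB).cross_eq (hAB.nodup hT) (leaves_nonempty A).choose_spec hx
      (leaves_nonempty B).choose_spec hy
  have hne : ∀ {A B}, IsSubtreeOf (node A B) T → ∀ x ∈ A.leaves, ∀ y ∈ B.leaves, x ≠ y :=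
    fun hAB x hx y hy hxy => disjoint_left.1 (nodup_node_iff.1 (hAB.nodup hT)).2.2 hx (hxy ▸ hy)
  refine ⟨W, ?_, ?_, ?_⟩
  · rintro (_ | ⟨A, B⟩) hs
    · exact hM0
    · obtain ⟨x, hx⟩ := A.leaves_nonempty
      obtain ⟨y, hy⟩ := B.leaves_nonempty
      rw [hW hs x hx y hy]
      exact hw0 x y (hne hs x hx y hy)
  · intro A B hAB s hs
    obtain ⟨x, hx⟩ := A.leaves_nonempty
    obtain ⟨y, hy⟩ := B.leaves_nonempty
    have hsT : IsSubtreeOf s T := (show IsSubtreeOf s (node A B) from Or.inr hs).trans hAB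
    rw [hW hAB x hx y hy]
    rcases s with v | ⟨A', B'⟩
    · exact hwM x (hAB.leaves_subset (by simp [hx])) y (hAB.leaves_subset (by simp [hy]))
    · obtain ⟨x', hx'⟩ := A'.leaves_nonempty
      obtain ⟨y', hy'⟩ := B'.leaves_nonempty
      have hsub : (node A' B').leaves ⊆ A.leaves ∪ B.leaves := by
        rcases hs with hs | hs <;> exact hs.leaves_subset.trans (by simp)
      rw [hW hsT x' hx' y' hy']
      exact (h.of_isSubtreeOf hAB).1 x hx y hy x' (hsub (by simp [hx'])) y' (hsub (by simp [hy']))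
        (hne hsT x' hx' y' hy')
  · suffices ∀ N, IsSubtreeOf N T → ∀ x y, x ∈ N.leaves → y ∈ N.leaves → x ≠ y →
        w x y = W (lcaSubtree N x y) from this T (isSubtreeOf_refl T)
    intro N
    induction N with
    | leaf v => simp +contextual
    | node L R ihL ihR =>
      intro hN x y hx hy hxy
      have hLR := (nodup_node_iff.1 (hN.nodup hT)).2.2
      simp only [leaves_node, mem_union] at hx hy
      rcases hx with hx | hx <;> rcases hy with hy | hy
      · rw [lcaSubtree_node_of_mem_left hx hy]
        exact ihL ((isSubtreeOf_node_left L R).trans hN) x y hx hy hxy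
      · rw [(lcaSubtree_node_of_mem_of_mem hLR hx hy).1, hW hN x hx y hy]
      · rw [(lcaSubtree_node_of_mem_of_mem hLR hy hx).2, hW hN y hy x hx, hsymm]
      · rw [lcaSubtree_node_of_mem_right hLR hx hy]
        exact ihR ((isSubtreeOf_node_right L R).trans hN) x y hx hy hxy

theorem isHierarchical_of_forall_le {T : ClusterTree V} (hT : T.leavesList.Nodup)
    (h : ∀ x ∈ T.leaves, ∀ y ∈ T.leaves, ∀ u ∈ T.leaves, ∀ v ∈ T.leaves,
      x ≠ y → u ≠ v → w x y ≤ w u v) : IsHierarchical w T := by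
  induction T with
  | leaf v => trivial
  | node L R ihL ihR =>
    obtain ⟨hL, hR, hLR⟩ := nodup_node_iff.1 hT
    simp only [leaves_node, mem_union] at h
    refine ⟨fun x hx y hy u hu v hv => h x (.inl hx) y (.inr hy) u (mem_union.1 hu)
      v (mem_union.1 hv) fun hxy => disjoint_left.1 hLR hx (hxy ▸ hy),
      ihL hL fun x hx y hy u hu v hv => h x (.inl hx) y (.inl hy) u (.inl hu) v (.inl hv),
      ihR hR fun x hx y hy u hu v hv => h x (.inr hx) y (.inr hy) u (.inr hu) v (.inr hv)⟩

theorem isGenerating_iff_isHierarchical (hw0 : ∀ x y, x ≠ y → 0 ≤ w x y)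
    (hsymm : ∀ x y, w x y = w y x) {T : ClusterTree V} (hT : T.leavesList.Nodup) :
    IsGenerating w T ↔ IsHierarchical w T :=
  ⟨isHierarchical_of_isGenerating hT, isGenerating_of_isHierarchical hw0 hsymm hT⟩

end Hierarchical

section Restrict

variable {V : Type} [DecidableEq V]

def ClusterTree.restrict : ClusterTree V → Finset V → Option (ClusterTree V)
  | leaf v, A => if v ∈ A then some (leaf v) else none
  | node L R, A => Option.merge node (L.restrict A) (R.restrict A)

theorem ClusterTree.leavesList_restrict (T : ClusterTree V) (A : Finset V) :
    ((T.restrict A).map leavesList).getD [] = T.leavesList.filter (· ∈ A) := by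
  induction T with
  | leaf v => by_cases hv : v ∈ A <;> simp [restrict, leavesList, hv]
  | node L R ihL ihR =>
    rcases hL : L.restrict A with _ | L' <;> rcases hR : R.restrict A with _ | R' <;>
      simp_all [restrict, leavesList, Option.merge]

variable {A : Finset V} {T T' : ClusterTree V}

theorem ClusterTree.leavesList_of_restrict_eq_some (h : T.restrict A = some T') :
    T'.leavesList = T.leavesList.filter (· ∈ A) := by
  simpa [h] using T.leavesList_restrict A

theorem ClusterTree.leaves_restrict (h : T.restrict A = some T') :
    T'.leaves = T.leaves ∩ A := by
  ext x
  simp [leaves, leavesList_of_restrict_eq_some h]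

theorem ClusterTree.nodup_restrict (hT : T.leavesList.Nodup) (h : T.restrict A = some T') :
    T'.leavesList.Nodup := by
  rw [leavesList_of_restrict_eq_some h]
  exact hT.filter _

theorem ClusterTree.restrict_eq_none_iff : T.restrict A = none ↔ Disjoint T.leaves A := by
  rw [disjoint_left]
  cases h : T.restrict A with
  | none =>
    have := T.leavesList_restrict A
    simp only [h, Option.map_none, Option.getD_none, true_iff] at this ⊢
    intro x hx hxA
    simpa [hxA, mem_leaves.1 hx] using List.filter_eq_nil_iff.1 this.symm x
  | some T' =>
    simp only [reduceCtorEq, false_iff, not_forall, not_not]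
    obtain ⟨x, hx⟩ := leaves_nonempty T'
    rw [leaves_restrict h, mem_inter] at hx
    exact ⟨x, hx.1, hx.2⟩

theorem ClusterTree.exists_restrict_eq_some (h : ∃ x ∈ T.leaves, x ∈ A) :
    ∃ T', T.restrict A = some T' := by
  obtain ⟨x, hx, hxA⟩ := h
  cases hT : T.restrict A with
  | none => exact absurd hxA (disjoint_left.1 (restrict_eq_none_iff.1 hT) hx)
  | some T' => exact ⟨T', rfl⟩

theorem ClusterTree.restrict_eq_self (h : T.leaves ⊆ A) : T.restrict A = some T := by
  induction T with
  | leaf v => simpa [restrict] using h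
  | node L R ihL ihR =>
    simp only [leaves_node, union_subset_iff] at h
    simp [restrict, ihL h.1, ihR h.2, Option.merge]

theorem ClusterTree.restrict_leaves_of_isSubtreeOf (hT : T.leavesList.Nodup)
    (h : IsSubtreeOf T' T) : T.restrict T'.leaves = some T' := by
  induction T with
  | leaf v => rw [isSubtreeOf_leaf.1 h]; simp [restrict]
  | node L R ihL ihR =>
    obtain ⟨hL, hR, hLR⟩ := nodup_node_iff.1 hT
    rcases h with rfl | h | h
    · exact restrict_eq_self subset_rfl
    · rw [restrict, ihL hL h, restrict_eq_none_iff.2 (hLR.symm.mono_right h.leaves_subset)]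
      rfl
    · rw [restrict, ihR hR h, restrict_eq_none_iff.2 (hLR.mono_right h.leaves_subset)]
      rfl

/-- A node whose children both meet `A` pays `g` of its full child sizes, which is more than `g`
of the sizes of the traces on `A` unless these traces are the whole children. -/
theorem cutWeight_mul_restrict_le {u : V → V → ℝ} {g : ℕ → ℕ → ℝ}
    (hg : StrictMonoOn (Function.uncurry g) {p | 1 ≤ p.1 ∧ 1 ≤ p.2})
    (hu : ∀ x y, 0 ≤ u x y) (hsupp : ∀ x y, u x y ≠ 0 → x ∈ A ∧ y ∈ A)
    (hpos : ∀ x ∈ A, ∀ y ∈ A, x ≠ y → 0 < u x y) {L R L' R' : ClusterTree V}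
    (hLR : Disjoint L.leaves R.leaves) (hL' : L.restrict A = some L')
    (hR' : R.restrict A = some R') :
    cutWeight u L'.leaves R'.leaves * g L'.leaves.card R'.leaves.card ≤
        cutWeight u L.leaves R.leaves * g L.leaves.card R.leaves.card ∧
      (cutWeight u L'.leaves R'.leaves * g L'.leaves.card R'.leaves.card =
          cutWeight u L.leaves R.leaves * g L.leaves.card R.leaves.card →
        L'.leaves = L.leaves ∧ R'.leaves = R.leaves) := by
  have hL'A := leaves_restrict hL'
  have hR'A := leaves_restrict hR'
  obtain ⟨a, ha⟩ := leaves_nonempty L'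
  obtain ⟨b, hb⟩ := leaves_nonempty R'
  rw [hL'A, mem_inter] at ha
  rw [hR'A, mem_inter] at hb
  have hcut : cutWeight u L'.leaves R'.leaves = cutWeight u L.leaves R.leaves := by
    rw [hL'A, hR'A, cutWeight_inter hsupp]
  have hcutpos : 0 < cutWeight u L.leaves R.leaves := cutWeight_pos hu ha.1 hb.1
    (hpos a ha.2 b hb.2 fun hab => disjoint_left.1 hLR ha.1 (hab ▸ hb.1))
  have hsubL : L'.leaves ⊆ L.leaves := hL'A ▸ inter_subset_left
  have hsubR : R'.leaves ⊆ R.leaves := hR'A ▸ inter_subset_left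
  have hle : (L'.leaves.card, R'.leaves.card) ≤ (L.leaves.card, R.leaves.card) :=
    ⟨card_le_card hsubL, card_le_card hsubR⟩
  have hdom : ∀ X Y : ClusterTree V, (X.leaves.card, Y.leaves.card) ∈
      {p : ℕ × ℕ | 1 ≤ p.1 ∧ 1 ≤ p.2} := fun X Y =>
    ⟨(leaves_nonempty X).card_pos, (leaves_nonempty Y).card_pos⟩
  rw [hcut, mul_le_mul_iff_right₀ hcutpos, mul_right_inj' hcutpos.ne']
  refine ⟨hg.monotoneOn (hdom L' R') (hdom L R) hle, fun heq => ?_⟩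
  obtain ⟨hcL, hcR⟩ : L'.leaves.card = L.leaves.card ∧ R'.leaves.card = R.leaves.card := by
    by_contra hne
    exact (hg (hdom L' R') (hdom L R) (hle.lt_of_ne (by simpa [Prod.ext_iff] using hne))).ne heq
  exact ⟨eq_of_subset_of_card_le hsubL hcL.ge, eq_of_subset_of_card_le hsubR hcR.ge⟩

theorem treeCost_restrict_le {u : V → V → ℝ} {g : ℕ → ℕ → ℝ}
    (hg : StrictMonoOn (Function.uncurry g) {p | 1 ≤ p.1 ∧ 1 ≤ p.2})
    (hu : ∀ x y, 0 ≤ u x y) (hsupp : ∀ x y, u x y ≠ 0 → x ∈ A ∧ y ∈ A)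
    (hpos : ∀ x ∈ A, ∀ y ∈ A, x ≠ y → 0 < u x y)
    (hT : T.leavesList.Nodup) (h : T.restrict A = some T') :
    treeCost u g T' ≤ treeCost u g T ∧
      (treeCost u g T' = treeCost u g T → IsSubtreeOf T' T) := by
  induction T generalizing T' with
  | leaf v =>
    obtain ⟨-, rfl⟩ : v ∈ A ∧ leaf v = T' := by simpa [ClusterTree.restrict] using h
    exact ⟨le_rfl, fun _ => isSubtreeOf_refl _⟩
  | node L R ihL ihR =>
    obtain ⟨hL, hR, hLR⟩ := nodup_node_iff.1 hT
    rcases hL' : L.restrict A with _ | L' <;> rcases hR' : R.restrict A with _ | R' <;>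
      simp only [ClusterTree.restrict, hL', hR', Option.merge, reduceCtorEq, Option.some.injEq] at h
    · have hLA := restrict_eq_none_iff.1 hL'
      rw [← h, treeCost, cutWeight_eq_zero_of_disjoint_left hsupp hLA,
        treeCost_eq_zero_of_disjoint hsupp hLA, zero_mul, zero_add, zero_add]
      exact ⟨(ihR hR hR').1, fun he => ((ihR hR hR').2 he).trans (isSubtreeOf_node_right L R)⟩
    · have hRA := restrict_eq_none_iff.1 hR'
      rw [← h, treeCost, cutWeight_eq_zero_of_disjoint_right hsupp _ hRA,
        treeCost_eq_zero_of_disjoint hsupp hRA, zero_mul, zero_add, add_zero]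
      exact ⟨(ihL hL hL').1, fun he => ((ihL hL hL').2 he).trans (isSubtreeOf_node_left L R)⟩
    · subst h
      obtain ⟨hcut, hcut'⟩ := cutWeight_mul_restrict_le hg hu hsupp hpos hLR hL' hR'
      obtain ⟨hcL, hcL'⟩ := ihL hL hL'
      obtain ⟨hcR, hcR'⟩ := ihR hR hR'
      rw [treeCost, treeCost]
      refine ⟨by linarith, fun he => ?_⟩
      obtain ⟨hLl, hRl⟩ := hcut' (by linarith)
      rw [(hcL' (by linarith)).eq_of_leaves_eq hL hLl, (hcR' (by linarith)).eq_of_leaves_eq hR hRl]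
      exact isSubtreeOf_refl _

end Restrict

section SharpBound

variable {V : Type} [DecidableEq V] {g : ℕ → ℕ → ℝ}

def IsSharpCostBound (u : V → V → ℝ) (g : ℕ → ℕ → ℝ) (A : Finset V) (m : ℝ)
    (P : ClusterTree V → Prop) : Prop :=
  ∀ T : ClusterTree V, T.leavesList.Nodup → T.leaves = A →
    m ≤ treeCost u g T ∧ (treeCost u g T = m ↔ P T)

theorem IsSharpCostBound.sub_cliqueW {w u : V → V → ℝ} {A : Finset V} {m : ℝ}
    {P : ClusterTree V → Prop} (hb : IsSharpCostBound w g A m P) (hsplit : CliqueCostSplits g)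
    {t : ℝ} (hu : ∀ x ∈ A, ∀ y ∈ A, x ≠ y → u x y = w x y - t) :
    IsSharpCostBound u g A (m - t * cliqueTreeCost g A.card) P := by
  intro T hT hTA
  have hcost : treeCost u g T = treeCost w g T - t * cliqueTreeCost g A.card := by
    rw [treeCost_congr hT (w' := fun x y => w x y + -t * cliqueW V x y) fun x hx y hy hxy => by
        simp [hu x (hTA ▸ hx) y (hTA ▸ hy) hxy, cliqueW, hxy, sub_eq_add_neg],
      treeCost_add, treeCost_const_mul, treeCost_cliqueW hsplit hT, hTA]
    ring
  obtain ⟨hm, hP⟩ := hb T hT hTA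
  rw [hcost]
  exact ⟨by linarith, by rw [← hP]; constructor <;> intro h <;> linarith⟩

theorem IsSharpCostBound.le_treeCost {u : V → V → ℝ} {A : Finset V} {m : ℝ}
    {P : ClusterTree V → Prop} (hb : IsSharpCostBound u g A m P)
    (hg : StrictMonoOn (Function.uncurry g) {p | 1 ≤ p.1 ∧ 1 ≤ p.2})
    (hu : ∀ x y, 0 ≤ u x y) (hsupp : ∀ x y, u x y ≠ 0 → x ∈ A ∧ y ∈ A)
    (hpos : ∀ x ∈ A, ∀ y ∈ A, x ≠ y → 0 < u x y) {T : ClusterTree V}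
    (hT : T.leavesList.Nodup) (hA : A ⊆ T.leaves) (hAne : A.Nonempty) :
    m ≤ treeCost u g T ∧
      (treeCost u g T = m ↔ ∃ N, IsSubtreeOf N T ∧ N.leaves = A ∧ P N) := by
  obtain ⟨x, hx⟩ := hAne
  obtain ⟨T', hT'⟩ := exists_restrict_eq_some ⟨x, hA hx, hx⟩
  have hT'A : T'.leaves = A := by rw [leaves_restrict hT', inter_eq_right.2 hA]
  obtain ⟨hm, hP⟩ := hb T' (nodup_restrict hT hT') hT'A
  obtain ⟨hle, hsub⟩ := treeCost_restrict_le hg hu hsupp hpos hT hT'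
  refine ⟨hm.trans hle, fun heq => ⟨T', hsub (by linarith), hT'A, hP.1 (by linarith)⟩, ?_⟩
  rintro ⟨N, hN, rfl, hPN⟩
  rw [restrict_leaves_of_isSubtreeOf hT hN, Option.some.injEq] at hT'
  subst hT'
  rw [treeCost_eq_of_isSubtreeOf hN hT hsupp, hP.2 hPN]

end SharpBound

section Blocks

variable {V : Type} {w : V → V → ℝ} {S : Finset V} {t : ℝ} {x y z : V}

theorem exists_min_weight (h : 1 < S.card) :
    ∃ t, (∀ x ∈ S, ∀ y ∈ S, x ≠ y → t ≤ w x y) ∧ ∃ a ∈ S, ∃ b ∈ S, a ≠ b ∧ w a b = t := by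
  obtain ⟨a, ha, b, hb, hab⟩ := one_lt_card.1 h
  obtain ⟨p, hp, hmin⟩ := S.offDiag.exists_min_image (fun p => w p.1 p.2)
    ⟨(a, b), mem_offDiag.2 ⟨ha, hb, hab⟩⟩
  obtain ⟨hp1, hp2, hp12⟩ := mem_offDiag.1 hp
  exact ⟨_, fun x hx y hy hxy => hmin (x, y) (mem_offDiag.2 ⟨hx, hy, hxy⟩), p.1, hp1, p.2, hp2,
    hp12, rfl⟩

variable [DecidableEq V]

noncomputable def block (w : V → V → ℝ) (S : Finset V) (t : ℝ) (x : V) : Finset V :=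
  S.filter fun y => x = y ∨ t < w x y

theorem mem_block : y ∈ block w S t x ↔ y ∈ S ∧ (x = y ∨ t < w x y) := mem_filter

theorem self_mem_block (hx : x ∈ S) : x ∈ block w S t x := mem_block.2 ⟨hx, .inl rfl⟩

theorem block_subset : block w S t x ⊆ S := filter_subset _ _

theorem lt_of_mem_block (hy : y ∈ block w S t x) (hxy : x ≠ y) : t < w x y :=
  (mem_block.1 hy).2.resolve_left hxy

theorem mem_block_comm (hw : IsUltrametricSimilarity w) (hx : x ∈ S) (hy : y ∈ block w S t x) :
    x ∈ block w S t y := by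
  rcases eq_or_ne x y with rfl | hxy
  · exact hy
  · exact mem_block.2 ⟨hx, .inr (hw.symm x y ▸ lt_of_mem_block hy hxy)⟩

theorem mem_block_trans (hw : IsUltrametricSimilarity w) (hy : y ∈ block w S t x)
    (hz : z ∈ block w S t y) : z ∈ block w S t x := by
  refine mem_block.2 ⟨block_subset hz, ?_⟩
  rcases eq_or_ne x y with rfl | hxy
  · exact (mem_block.1 hz).2
  rcases eq_or_ne y z with rfl | hyz
  · exact (mem_block.1 hy).2
  rcases eq_or_ne x z with hxz | hxz
  · exact .inl hxz
  · exact .inr ((lt_min (lt_of_mem_block hy hxy) (lt_of_mem_block hz hyz)).trans_le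
      (hw.min_le x y z hxy hyz hxz))

theorem block_eq_of_mem (hw : IsUltrametricSimilarity w) (hx : x ∈ S)
    (hy : y ∈ block w S t x) : block w S t y = block w S t x :=
  ext fun _ => ⟨mem_block_trans hw hy, mem_block_trans hw (mem_block_comm hw hx hy)⟩

theorem eq_of_not_mem_block (ht : ∀ x ∈ S, ∀ y ∈ S, x ≠ y → t ≤ w x y) (hx : x ∈ S)
    (hy : y ∈ S) (hyx : y ∉ block w S t x) : w x y = t := by
  simp only [mem_block, hy, true_and, not_or, not_lt] at hyx
  exact le_antisymm hyx.2 (ht x hx y hy hyx.1)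

theorem block_ssubset (hw : IsUltrametricSimilarity w) {a b : V} (ha : a ∈ S) (hb : b ∈ S)
    (hab : a ≠ b) (hwab : w a b = t) (hx : x ∈ S) : block w S t x ⊂ S := by
  refine ssubset_of_subset_of_ne block_subset fun h => ?_
  have ha' : a ∈ block w S t x := by rw [h]; exact ha
  have hba : b ∈ block w S t a := by rw [block_eq_of_mem hw hx ha', h]; exact hb
  exact (lt_of_mem_block hba hab).ne' hwab

noncomputable def blockExcess (w : V → V → ℝ) (t : ℝ) (B : Finset V) (x y : V) : ℝ :=
  if x ∈ B ∧ y ∈ B ∧ x ≠ y then w x y - t else 0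

theorem add_sum_blockExcess (hw : IsUltrametricSimilarity w)
    (ht : ∀ x ∈ S, ∀ y ∈ S, x ≠ y → t ≤ w x y) (hx : x ∈ S) (hy : y ∈ S) (hxy : x ≠ y) :
    t + ∑ B ∈ S.image (block w S t), blockExcess w t B x y = w x y := by
  rw [sum_eq_single (block w S t x)]
  · by_cases hyx : y ∈ block w S t x
    · simp [blockExcess, self_mem_block hx, hyx, hxy]
    · simp [blockExcess, hyx, eq_of_not_mem_block ht hx hy hyx]
  · intro B hB hBx
    obtain ⟨z, hz, rfl⟩ := mem_image.1 hB
    exact if_neg fun h => hBx (block_eq_of_mem hw hz h.1).symm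
  · exact fun h => absurd (mem_image_of_mem _ hx) h

end Blocks

section Minimizers

variable {V : Type} [DecidableEq V] {w : V → V → ℝ} {g : ℕ → ℕ → ℝ} {t : ℝ}

theorem IsHierarchical.exists_isSubtreeOf_leaves_eq (hsymm : ∀ x y, w x y = w y x)
    {T : ClusterTree V} (hT : T.leavesList.Nodup) (h : IsHierarchical w T) {B : Finset V}
    (hB : B ⊆ T.leaves) (hBne : B.Nonempty) (hin : ∀ a ∈ B, ∀ b ∈ B, a ≠ b → t < w a b)
    (hclosed : ∀ a ∈ B, ∀ z ∈ T.leaves, t < w a z → z ∈ B) :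
    ∃ N, IsSubtreeOf N T ∧ N.leaves = B := by
  induction T with
  | leaf v => exact ⟨leaf v, rfl, (by simpa [hBne.subset_singleton_iff] using hB : B = {v}).symm⟩
  | node L R ihL ihR =>
    obtain ⟨hL, hR, hLR⟩ := nodup_node_iff.1 hT
    have hsub : ∀ {X : ClusterTree V}, X.leaves ⊆ (node L R).leaves →
        ∀ a ∈ B, ∀ z ∈ X.leaves, t < w a z → z ∈ B := fun hX a ha z hz => hclosed a ha z (hX hz)
    by_cases hBL : B ⊆ L.leaves
    · obtain ⟨N, hN, hNB⟩ := ihL hL h.2.1 hBL (hsub (by simp))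
      exact ⟨N, hN.trans (isSubtreeOf_node_left L R), hNB⟩
    by_cases hBR : B ⊆ R.leaves
    · obtain ⟨N, hN, hNB⟩ := ihR hR h.2.2 hBR (hsub (by simp))
      exact ⟨N, hN.trans (isSubtreeOf_node_right L R), hNB⟩
    obtain ⟨b, hbB, hbL⟩ := not_subset.1 hBL
    obtain ⟨a, haB, haR⟩ := not_subset.1 hBR
    have hb : b ∈ R.leaves := by simpa [hbL] using hB hbB
    have ha : a ∈ L.leaves := by simpa [haR] using hB haB
    have hcross : ∀ x ∈ L.leaves, ∀ y ∈ R.leaves, t < w x y := fun x hx y hy =>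
      h.cross_eq hT ha hx hb hy ▸ hin a haB b hbB fun hab => haR (hab ▸ hb)
    refine ⟨node L R, isSubtreeOf_refl _, (hB.antisymm fun z hz => ?_).symm⟩
    rcases mem_union.1 (by simpa using hz) with hzL | hzR
    · exact hclosed b hbB z hz (hsymm z b ▸ hcross z hzL b hb)
    · exact hclosed a haB z hz (hcross a ha z hzR)

theorem isHierarchical_of_forall_exists {T : ClusterTree V} (hT : T.leavesList.Nodup)
    (ht : ∀ x ∈ T.leaves, ∀ y ∈ T.leaves, x ≠ y → t ≤ w x y)
    (h : ∀ x ∈ T.leaves, ∃ N, IsSubtreeOf N T ∧ x ∈ N.leaves ∧ IsHierarchical w N ∧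
      ∀ y ∈ T.leaves, y ∉ N.leaves → w x y = t) :
    IsHierarchical w T := by
  induction T with
  | leaf v => trivial
  | node L R ihL ihR =>
    by_cases hroot : IsHierarchical w (node L R)
    · exact hroot
    obtain ⟨hL, hR, hLR⟩ := nodup_node_iff.1 hT
    have hL' : ∀ x ∈ L.leaves, ∃ N, IsSubtreeOf N L ∧ x ∈ N.leaves ∧ IsHierarchical w N ∧
        ∀ y ∈ (node L R).leaves, y ∉ N.leaves → w x y = t := by
      intro x hx
      obtain ⟨N, hN, hxN, hNh, hNt⟩ := h x (by simp [hx])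
      rcases hN with rfl | hN | hN
      · exact absurd hNh hroot
      · exact ⟨N, hN, hxN, hNh, hNt⟩
      · exact absurd (hN.leaves_subset hxN) (disjoint_left.1 hLR hx)
    have hR' : ∀ x ∈ R.leaves, ∃ N, IsSubtreeOf N R ∧ x ∈ N.leaves ∧ IsHierarchical w N ∧
        ∀ y ∈ (node L R).leaves, y ∉ N.leaves → w x y = t := by
      intro x hx
      obtain ⟨N, hN, hxN, hNh, hNt⟩ := h x (by simp [hx])
      rcases hN with rfl | hN | hN
      · exact absurd hNh hroot
      · exact absurd hx (disjoint_left.1 hLR (hN.leaves_subset hxN))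
      · exact ⟨N, hN, hxN, hNh, hNt⟩
    refine ⟨fun x hx y hy u hu v hv huv => ?_,
      ihL hL (fun x hx y hy => ht x (by simp [hx]) y (by simp [hy])) fun x hx => ?_,
      ihR hR (fun x hx y hy => ht x (by simp [hx]) y (by simp [hy])) fun x hx => ?_⟩
    · obtain ⟨N, hN, -, -, hNt⟩ := hL' x hx
      rw [hNt y (by simp [hy]) fun hyN => disjoint_left.1 hLR (hN.leaves_subset hyN) hy]
      exact ht u (by simpa using hu) v (by simpa using hv) huv
    · obtain ⟨N, hN, hxN, hNh, hNt⟩ := hL' x hx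
      exact ⟨N, hN, hxN, hNh, fun y hy => hNt y (by simp [hy])⟩
    · obtain ⟨N, hN, hxN, hNh, hNt⟩ := hR' x hx
      exact ⟨N, hN, hxN, hNh, fun y hy => hNt y (by simp [hy])⟩

theorem isHierarchical_iff_forall_block (hw : IsUltrametricSimilarity w) {S : Finset V}
    (ht : ∀ x ∈ S, ∀ y ∈ S, x ≠ y → t ≤ w x y) {T : ClusterTree V} (hT : T.leavesList.Nodup)
    (hTS : T.leaves = S) :
    IsHierarchical w T ↔ ∀ x ∈ S, ∃ N, IsSubtreeOf N T ∧ N.leaves = block w S t x ∧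
      IsHierarchical w N := by
  subst hTS
  constructor
  · intro h x hx
    obtain ⟨N, hN, hNB⟩ := h.exists_isSubtreeOf_leaves_eq hw.symm hT block_subset
      ⟨x, self_mem_block hx⟩
      (fun a ha b hb hab => lt_of_mem_block (block_eq_of_mem hw hx ha ▸ hb) hab)
      (fun a ha z hz haz => block_eq_of_mem hw hx ha ▸ mem_block.2 ⟨hz, .inr haz⟩)
    exact ⟨N, hN, hNB, h.of_isSubtreeOf hN⟩
  · intro h
    refine isHierarchical_of_forall_exists hT ht fun x hx => ?_
    obtain ⟨N, hN, hNB, hNh⟩ := h x hx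
    exact ⟨N, hN, hNB ▸ self_mem_block hx, hNh,
      fun y hy hyN => eq_of_not_mem_block ht hx hy (hNB ▸ hyN)⟩

/-- Split `S` into the block of an endpoint of a lightest edge and the rest. -/
theorem exists_isHierarchical (hw : IsUltrametricSimilarity w) (S : Finset V)
    (hS : S.Nonempty) :
    ∃ T : ClusterTree V, T.leavesList.Nodup ∧ T.leaves = S ∧ IsHierarchical w T := by
  induction S using Finset.strongInduction with
  | H S ih =>
  rcases le_or_gt S.card 1 with hS1 | hS1
  · obtain ⟨v, rfl⟩ := card_eq_one.1 (le_antisymm hS1 hS.card_pos)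
    exact ⟨leaf v, by simp [leavesList], by simp, trivial⟩
  obtain ⟨t, ht, a, ha, b, hb, hab, hwab⟩ := exists_min_weight (w := w) hS1
  have hbB : b ∉ block w S t a := fun h => (lt_of_mem_block h hab).ne' hwab
  obtain ⟨TB, hTB, hTBl, hTBh⟩ := ih _ (block_ssubset hw ha hb hab hwab ha) ⟨a, self_mem_block ha⟩
  obtain ⟨TC, hTC, hTCl, hTCh⟩ := ih (S \ block w S t a)
    (sdiff_ssubset block_subset ⟨a, self_mem_block ha⟩) ⟨b, mem_sdiff.2 ⟨hb, hbB⟩⟩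
  refine ⟨node TB TC, nodup_node_iff.2 ⟨hTB, hTC, hTBl ▸ hTCl ▸ disjoint_sdiff⟩,
    by rw [leaves_node, hTBl, hTCl, union_sdiff_of_subset block_subset], ?_, hTBh, hTCh⟩
  intro x hx y hy u hu v hv huv
  rw [hTBl] at hx
  rw [hTCl, mem_sdiff, ← block_eq_of_mem hw ha hx] at hy
  rw [eq_of_not_mem_block ht (block_subset hx) hy.1 hy.2]
  rw [hTBl, hTCl, union_sdiff_of_subset block_subset] at hu hv
  exact ht u hu v hv huv

theorem blockExcess_nonneg {S B : Finset V} (ht : ∀ x ∈ S, ∀ y ∈ S, x ≠ y → t ≤ w x y)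
    (hB : B ⊆ S) (x y : V) : 0 ≤ blockExcess w t B x y := by
  unfold blockExcess
  split_ifs with h
  exacts [sub_nonneg.2 (ht x (hB h.1) y (hB h.2.1) h.2.2), le_rfl]

theorem blockExcess_ne_zero {B : Finset V} {x y : V} (h : blockExcess w t B x y ≠ 0) :
    x ∈ B ∧ y ∈ B := by
  by_contra hxy
  exact h (if_neg fun h' => hxy ⟨h'.1, h'.2.1⟩)

theorem blockExcess_pos (hw : IsUltrametricSimilarity w) {S : Finset V} {x y z : V}
    (hx : x ∈ S) (hy : y ∈ block w S t x) (hz : z ∈ block w S t x) (hyz : y ≠ z) :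
    0 < blockExcess w t (block w S t x) y z := by
  rw [blockExcess, if_pos ⟨hy, hz, hyz⟩, sub_pos]
  exact lt_of_mem_block (block_eq_of_mem hw hx hy ▸ hz) hyz

theorem treeCost_eq_add_sum_blockExcess (hw : IsUltrametricSimilarity w) {S : Finset V}
    (ht : ∀ x ∈ S, ∀ y ∈ S, x ≠ y → t ≤ w x y) (hsplit : CliqueCostSplits g)
    {T : ClusterTree V} (hT : T.leavesList.Nodup) (hTS : T.leaves = S) :
    treeCost w g T = t * cliqueTreeCost g S.card +
      ∑ B ∈ S.image (block w S t), treeCost (blockExcess w t B) g T := by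
  rw [treeCost_congr hT (w' := fun x y =>
      t * cliqueW V x y + ∑ B ∈ S.image (block w S t), blockExcess w t B x y)
      fun x hx y hy hxy => ?_,
    treeCost_add, treeCost_const_mul, treeCost_sum, treeCost_cliqueW hsplit hT, hTS]
  rw [hTS] at hx hy
  rw [cliqueW, if_neg hxy, mul_one, add_sum_blockExcess hw ht hx hy hxy]

theorem exists_isSharpCostBound (hw : IsUltrametricSimilarity w) (hsplit : CliqueCostSplits g)
    (hg : StrictMonoOn (Function.uncurry g) {p | 1 ≤ p.1 ∧ 1 ≤ p.2}) (S : Finset V)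
    (hS : S.Nonempty) : ∃ m, IsSharpCostBound w g S m (IsHierarchical w) := by
  induction S using Finset.strongInduction with
  | H S ih =>
  rcases le_or_gt S.card 1 with hS1 | hS1
  · obtain ⟨v, rfl⟩ := card_eq_one.1 (le_antisymm hS1 hS.card_pos)
    refine ⟨0, fun T hT hTS => ?_⟩
    rw [eq_leaf_of_leaves_eq_singleton hT hTS]
    exact ⟨le_rfl, iff_of_true rfl trivial⟩
  obtain ⟨t, ht, a, ha, b, hb, hab, hwab⟩ := exists_min_weight (w := w) hS1
  have hbound : ∀ B ∈ S.image (block w S t),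
      ∃ m, IsSharpCostBound (blockExcess w t B) g B m (IsHierarchical w) := by
    simp only [forall_mem_image]
    intro x hx
    obtain ⟨m, hm⟩ := ih _ (block_ssubset hw ha hb hab hwab hx) ⟨x, self_mem_block hx⟩
    exact ⟨_, hm.sub_cliqueW hsplit fun y hy z hz hyz => if_pos ⟨hy, hz, hyz⟩⟩
  choose! m hm using hbound
  refine ⟨t * cliqueTreeCost g S.card + ∑ B ∈ S.image (block w S t), m B, fun T hT hTS => ?_⟩
  have hlift : ∀ B ∈ S.image (block w S t), m B ≤ treeCost (blockExcess w t B) g T ∧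
      (treeCost (blockExcess w t B) g T = m B ↔
        ∃ N, IsSubtreeOf N T ∧ N.leaves = B ∧ IsHierarchical w N) := by
    simp only [forall_mem_image]
    intro x hx
    exact (hm _ (mem_image_of_mem _ hx)).le_treeCost hg (blockExcess_nonneg ht block_subset)
      (fun _ _ => blockExcess_ne_zero) (fun _ hy _ hz => blockExcess_pos hw hx hy hz) hT
      (hTS ▸ block_subset) ⟨x, self_mem_block hx⟩
  rw [treeCost_eq_add_sum_blockExcess hw ht hsplit hT hTS,
    isHierarchical_iff_forall_block hw ht hT hTS,
    add_le_add_iff_left, add_right_inj, eq_comm, sum_eq_sum_iff_of_le fun B hB => (hlift B hB).1]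
  refine ⟨sum_le_sum fun B hB => (hlift B hB).1, ?_⟩
  simp only [forall_mem_image]
  exact forall₂_congr fun x hx => eq_comm.trans (hlift _ (mem_image_of_mem _ hx)).2

end Minimizers

section Admissibility

variable {V : Type} [DecidableEq V] {w : V → V → ℝ} {g : ℕ → ℕ → ℝ}

theorem isMinimal_iff_isGenerating [Fintype V] (hw : IsUltrametricSimilarity w)
    (hsplit : CliqueCostSplits g)
    (hg : StrictMonoOn (Function.uncurry g) {p | 1 ≤ p.1 ∧ 1 ≤ p.2}) {T : ClusterTree V}
    (hT : IsClusterTree T) :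
    (∀ T', IsClusterTree T' → treeCost w g T ≤ treeCost w g T') ↔ IsGenerating w T := by
  have huniv : (univ : Finset V).Nonempty := hT.2 ▸ leaves_nonempty T
  obtain ⟨m, hm⟩ := exists_isSharpCostBound hw hsplit hg univ huniv
  obtain ⟨T0, hT0, hT0l, hT0h⟩ := exists_isHierarchical hw univ huniv
  rw [isGenerating_iff_isHierarchical hw.nonneg hw.symm hT.1, ← (hm T hT.1 hT.2).2]
  refine ⟨fun hmin => le_antisymm ?_ (hm T hT.1 hT.2).1,
    fun hTm T' hT' => hTm ▸ (hm T' hT'.1 hT'.2).1⟩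
  exact (hm T0 hT0 hT0l).2.2 hT0h ▸ hmin T0 ⟨hT0, hT0l⟩

theorem admissible_of_cliqueCostSplits (hsplit : CliqueCostSplits g)
    (hg : StrictMonoOn (Function.uncurry g) {p | 1 ≤ p.1 ∧ 1 ≤ p.2}) : Admissible g :=
  fun _ _ _ _ ⟨d, f, hd, hf, hf0, hwf, _⟩ _ hT =>
    isMinimal_iff_isGenerating
      (isUltrametricSimilarity_of_generatedFromUltrametric ⟨d, f, hd, hf, hf0, hwf⟩) hsplit hg hT

end Admissibility

section Necessity

variable {V : Type} [DecidableEq V] {g : ℕ → ℕ → ℝ}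

theorem Admissible.treeCost_le [Fintype V] (hadm : Admissible g) {w : V → V → ℝ}
    (hw : IsUltrametricSimilarity w) {T T' : ClusterTree V} (hT : IsClusterTree T)
    (hT' : IsClusterTree T') (h : IsHierarchical w T) : treeCost w g T ≤ treeCost w g T' :=
  (hadm V w (generatedFromMinimalUltrametric_of_isUltrametricSimilarity hw) T hT).2
    (isGenerating_of_isHierarchical hw.nonneg hw.symm hT.1 h) T' hT'

theorem Admissible.treeCost_lt [Fintype V] (hadm : Admissible g) {w : V → V → ℝ}
    (hw : IsUltrametricSimilarity w) {T T' : ClusterTree V} (hT : IsClusterTree T)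
    (hT' : IsClusterTree T') (h : IsHierarchical w T) (h' : ¬ IsHierarchical w T') :
    treeCost w g T < treeCost w g T' := by
  obtain ⟨T'', hT'', hlt⟩ : ∃ T'', IsClusterTree T'' ∧ treeCost w g T'' < treeCost w g T' := by
    by_contra! hmin
    exact h' (isHierarchical_of_isGenerating hT'.1 ((hadm V w
      (generatedFromMinimalUltrametric_of_isUltrametricSimilarity hw) T' hT').1 hmin))
  exact (hadm.treeCost_le hw hT hT'' h).trans_lt hlt

theorem isUltrametricSimilarity_cliqueW : IsUltrametricSimilarity (cliqueW V) :=
  ⟨fun x y hxy => by simp [cliqueW, hxy], fun x y => by simp [cliqueW, eq_comm],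
    fun x y z hxy hyz hxz => by simp [cliqueW, hxy, hyz, hxz]⟩

theorem Admissible.treeCost_cliqueW_eq (hadm : Admissible g) (V : Type) [Fintype V]
    [DecidableEq V] (T T' : ClusterTree V) (hT : IsClusterTree T) (hT' : IsClusterTree T') :
    treeCost (cliqueW V) g T = treeCost (cliqueW V) g T' := by
  have h : ∀ {T : ClusterTree V}, IsClusterTree T → IsHierarchical (cliqueW V) T := fun hT =>
    isHierarchical_of_forall_le hT.1 fun x _ y _ u _ v _ hxy huv => by simp [cliqueW, hxy, huv]
  exact le_antisymm (hadm.treeCost_le isUltrametricSimilarity_cliqueW hT hT' (h hT))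
    (hadm.treeCost_le isUltrametricSimilarity_cliqueW hT' hT (h hT'))

theorem isClusterTree_of_leavesList_eq [Fintype V] {T : ClusterTree V} {l : List V}
    (h : T.leavesList = l) (hnd : l.Nodup) (hl : ∀ x, x ∈ l) : IsClusterTree T :=
  ⟨h ▸ hnd, eq_univ_of_forall fun x => mem_leaves.2 (h ▸ hl x)⟩

theorem cliqueCostSplits_of_treeCost_cliqueW_eq
    (h : ∀ (V : Type) [Fintype V] [DecidableEq V] (T T' : ClusterTree V),
      IsClusterTree T → IsClusterTree T' →
      treeCost (cliqueW V) g T = treeCost (cliqueW V) g T') :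
    CliqueCostSplits g := by
  intro a b ha hb
  let lA : List (Fin a ⊕ Fin b) := (List.finRange a).map Sum.inl
  let lB : List (Fin a ⊕ Fin b) := (List.finRange b).map Sum.inr
  have hnd : (lA ++ lB).Nodup := by simp [lA, lB, List.nodup_append,
    (List.nodup_finRange a).map Sum.inl_injective, (List.nodup_finRange b).map Sum.inr_injective]
  have hcover : ∀ x, x ∈ lA ++ lB := by rintro (i | i) <;> simp [lA, lB]
  obtain ⟨TA, hTA, hcA⟩ := exists_leavesList_eq_treeCost_cliqueW g (l := lA)
    (by simp [lA]; omega) (List.nodup_append.1 hnd).1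
  obtain ⟨TB, hTB, hcB⟩ := exists_leavesList_eq_treeCost_cliqueW g (l := lB)
    (by simp [lB]; omega) (List.nodup_append.1 hnd).2.1
  obtain ⟨T, hT, hc⟩ := exists_leavesList_eq_treeCost_cliqueW g (l := lA ++ lB)
    (by simp [lA]; omega) hnd
  have hAB : (node TA TB).leavesList = lA ++ lB := by simp [leavesList, hTA, hTB]
  have := h _ T (node TA TB) (isClusterTree_of_leavesList_eq hT hnd hcover)
    (isClusterTree_of_leavesList_eq hAB hnd hcover)
  rw [hc, treeCost, cutWeight_cliqueW (nodup_node_iff.1 (hAB ▸ hnd)).2.2, hcA, hcB,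
    card_leaves (hTA ▸ (List.nodup_append.1 hnd).1),
    card_leaves (hTB ▸ (List.nodup_append.1 hnd).2.1), hTA, hTB] at this
  simpa [lA, lB] using this

noncomputable def apexWeight (z x y : V) : ℝ :=
  if x = y then 0 else if x = z ∨ y = z then 1 else 2

theorem isUltrametricSimilarity_apexWeight (z : V) : IsUltrametricSimilarity (apexWeight z) := by
  refine ⟨fun x y _ => ?_, fun x y => ?_, fun x y y' hxy hyy' hxy' => ?_⟩ <;>
    simp only [apexWeight] <;> split_ifs <;> simp_all [eq_comm]

variable {TA TB : ClusterTree V} {z : V}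

theorem isHierarchical_apexWeight (hT : (node (node TA TB) (leaf z)).leavesList.Nodup) :
    IsHierarchical (apexWeight z) (node (node TA TB) (leaf z)) := by
  have hz : z ∉ TA.leaves ∪ TB.leaves := by simpa using (nodup_node_iff.1 hT).2.2
  refine ⟨fun x hx y hy u _ v _ huv => ?_, isHierarchical_of_forall_le (nodup_node_iff.1 hT).1
    fun x hx y hy u hu v hv hxy huv => ?_, trivial⟩
  · rw [leaves_leaf, mem_singleton] at hy
    subst hy
    have hxz : x ≠ y := fun h => hz (h ▸ by simpa using hx)
    simp only [apexWeight, hxz, huv, if_false, or_true, if_true]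
    split_ifs <;> norm_num
  · have hne : ∀ x ∈ TA.leaves ∪ TB.leaves, x ≠ z := fun x hx h => hz (h ▸ hx)
    simp only [leaves_node] at hx hy hu hv
    simp [apexWeight, hxy, huv, hne x hx, hne y hy, hne u hu, hne v hv]

theorem not_isHierarchical_apexWeight (hT : (node (node TA (leaf z)) TB).leavesList.Nodup) :
    ¬ IsHierarchical (apexWeight z) (node (node TA (leaf z)) TB) := by
  intro h
  obtain ⟨a, ha⟩ := leaves_nonempty TA
  obtain ⟨b, hb⟩ := leaves_nonempty TB
  have hdisj := (nodup_node_iff.1 hT).2.2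
  simp only [leaves_node, leaves_leaf, disjoint_union_left, disjoint_singleton_left] at hdisj
  have hab : a ≠ b := fun h => disjoint_left.1 hdisj.1 ha (h ▸ hb)
  have haz : a ≠ z := by
    rintro rfl
    exact absurd (mem_singleton_self a) (disjoint_left.1
      (nodup_node_iff.1 (nodup_node_iff.1 hT).1).2.2 ha)
  have hbz : b ≠ z := fun h => hdisj.2 (h ▸ hb)
  have := h.cross_eq hT (x := a) (x' := z) (by simp [ha]) (by simp) hb hb
  simp [apexWeight, hab, haz, hbz, hbz.symm] at this

theorem treeCost_apexWeight_left (hT : (node (node TA TB) (leaf z)).leavesList.Nodup) :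
    treeCost (apexWeight z) g (node (node TA TB) (leaf z)) =
      (TA.leaves.card + TB.leaves.card) * g (TA.leaves.card + TB.leaves.card) 1 +
        TA.leaves.card * TB.leaves.card * 2 * g TA.leaves.card TB.leaves.card +
        treeCost (apexWeight z) g TA + treeCost (apexWeight z) g TB := by
  obtain ⟨hAB, -, hABz⟩ := nodup_node_iff.1 hT
  have hdAB := (nodup_node_iff.1 hAB).2.2
  have hne : ∀ x ∈ TA.leaves ∪ TB.leaves, x ≠ z := fun x hx h =>
    disjoint_left.1 hABz (by simpa using hx) (by simp [h])
  simp only [treeCost]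
  rw [cutWeight_const (c := 1) fun x hx y hy => ?_,
    cutWeight_const (c := 2) fun x hx y hy => ?_, card_leaves_node hAB]
  · simp
    ring
  · have hxy : x ≠ y := fun h => disjoint_left.1 hdAB hx (h ▸ hy)
    simp [apexWeight, hne x (mem_union_left _ hx), hne y (mem_union_right _ hy), hxy]
  · rw [leaves_leaf, mem_singleton] at hy
    simp [apexWeight, hy, hne x (by simpa using hx)]

theorem treeCost_apexWeight_right (hT : (node (node TA (leaf z)) TB).leavesList.Nodup) :
    treeCost (apexWeight z) g (node (node TA (leaf z)) TB) =
      (TA.leaves.card * TB.leaves.card * 2 + TB.leaves.card) *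
          g (TA.leaves.card + 1) TB.leaves.card +
        TA.leaves.card * g TA.leaves.card 1 +
        treeCost (apexWeight z) g TA + treeCost (apexWeight z) g TB := by
  obtain ⟨hAz, -, hAzB⟩ := nodup_node_iff.1 hT
  simp only [leaves_node, leaves_leaf, disjoint_union_left, disjoint_singleton_left] at hAzB
  have hAz' := (nodup_node_iff.1 hAz).2.2
  rw [leaves_leaf, disjoint_singleton_right] at hAz'
  have hzB : ∀ y ∈ TB.leaves, y ≠ z := fun y hy h => hAzB.2 (h ▸ hy)
  have hzA : ∀ x ∈ TA.leaves, x ≠ z := fun x hx h => hAz' (h ▸ hx)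
  simp only [treeCost]
  rw [card_leaves_node hAz, leaves_node, leaves_leaf,
    cutWeight_union_left _ _ (disjoint_singleton_right.2 hAz'),
    cutWeight_const (c := 2) fun x hx y hy => ?_, cutWeight_const (c := 1) fun x hx y hy => ?_,
    cutWeight_const (c := 1) fun x hx y hy => ?_]
  · simp
    ring
  · simp [apexWeight, mem_singleton.1 hy, hzA x hx]
  · simp [apexWeight, mem_singleton.1 hx, (hzB y hy).symm]
  · have hxy : x ≠ y := fun h => disjoint_left.1 hAzB.1 hx (h ▸ hy)
    simp [apexWeight, hzA x hx, hzB y hy, hxy]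

theorem IsClusterTree.swap [Fintype V] {A B C : ClusterTree V}
    (h : IsClusterTree (node (node A B) C)) : IsClusterTree (node (node A C) B) := by
  refine ⟨?_, by rw [← h.2, leaves_node, leaves_node, leaves_node, leaves_node,
    union_right_comm]⟩
  have : (node (node A B) C).leavesList.Perm (node (node A C) B).leavesList := by
    simpa [leavesList] using List.perm_append_comm.append_left A.leavesList
  exact this.nodup_iff.1 h.1

theorem exists_isClusterTree_apex {n1 n2 : ℕ} (h1 : 1 ≤ n1) (h2 : 1 ≤ n2) :
    ∃ TA TB : ClusterTree (Option (Fin n1 ⊕ Fin n2)), TA.leaves.card = n1 ∧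
      TB.leaves.card = n2 ∧ IsClusterTree (node (node TA TB) (leaf none)) := by
  let lA : List (Option (Fin n1 ⊕ Fin n2)) := (List.finRange n1).map (some ∘ Sum.inl)
  let lB : List (Option (Fin n1 ⊕ Fin n2)) := (List.finRange n2).map (some ∘ Sum.inr)
  have hlA : lA.Nodup :=
    (List.nodup_finRange n1).map ((Option.some_injective _).comp Sum.inl_injective)
  have hlB : lB.Nodup :=
    (List.nodup_finRange n2).map ((Option.some_injective _).comp Sum.inr_injective)
  have hnd : (lA ++ lB ++ [none]).Nodup := by
    refine List.nodup_append.2 ⟨List.nodup_append.2 ⟨hlA, hlB, ?_⟩, List.nodup_singleton _, ?_⟩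
    · simp [lA, lB]
    · simp only [lA, lB, List.mem_append, List.mem_map, List.mem_finRange, true_and,
        Function.comp_apply]
      rintro _ (⟨_, rfl⟩ | ⟨_, rfl⟩) <;> simp
  obtain ⟨TA, hTA⟩ := exists_leavesList_eq (l := lA) (by simp [lA]; omega)
  obtain ⟨TB, hTB⟩ := exists_leavesList_eq (l := lB) (by simp [lB]; omega)
  refine ⟨TA, TB, by rw [card_leaves (hTA ▸ hlA), hTA]; simp [lA],
    by rw [card_leaves (hTB ▸ hlB), hTB]; simp [lB],
    isClusterTree_of_leavesList_eq (by simp [leavesList, hTA, hTB]) hnd ?_⟩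
  rintro (_ | i | i) <;> simp [lA, lB]

theorem Admissible.lt_add_one_left (hadm : Admissible g) (hsplit : CliqueCostSplits g)
    {n1 n2 : ℕ} (h1 : 1 ≤ n1) (h2 : 1 ≤ n2) : g n1 n2 < g (n1 + 1) n2 := by
  obtain ⟨TA, TB, hA, hB, hT⟩ := exists_isClusterTree_apex h1 h2
  suffices g TA.leaves.card TB.leaves.card < g (TA.leaves.card + 1) TB.leaves.card by
    rwa [hA, hB] at this
  replace h1 : 1 ≤ TA.leaves.card := by omega
  replace h2 : 1 ≤ TB.leaves.card := by omega
  have hlt := hadm.treeCost_lt (isUltrametricSimilarity_apexWeight none) hT hT.swap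
    (isHierarchical_apexWeight hT.1) (not_isHierarchical_apexWeight hT.swap.1)
  rw [treeCost_apexWeight_left hT.1, treeCost_apexWeight_right hT.swap.1] at hlt
  have e1 := hsplit (TA.leaves.card + TB.leaves.card) 1 (by omega) le_rfl
  have e2 := hsplit (TA.leaves.card + 1) TB.leaves.card (by omega) h2
  have e3 := hsplit TA.leaves.card TB.leaves.card h1 h2
  have e4 := hsplit TA.leaves.card 1 h1 le_rfl
  rw [add_right_comm] at e2
  push_cast at e1 e2 e3 e4
  have hn : (0 : ℝ) < TA.leaves.card * TB.leaves.card := by positivity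
  refine lt_of_mul_lt_mul_left ?_ hn.le
  linarith

end Necessity

/-- Theorem 1, CKMM: characterization of admissible cost functions.
A cost function of the form (1,2) is admissible iff (1) all cluster trees of a
unit-weight clique have the same cost, (2) `g` is symmetric, and (3) `g` is strictly
increasing in its arguments. -/
theorem statement0 (g : ℕ → ℕ → ℝ) (hg : ∀ a b : ℕ, 0 ≤ g a b) :
    Admissible g ↔
      ((∀ (V : Type) [Fintype V] [DecidableEq V] (T T' : ClusterTree V),
          IsClusterTree T → IsClusterTree T' →
          treeCost (cliqueW V) g T = treeCost (cliqueW V) g T') ∧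
        (∀ n1 n2 : ℕ, 1 ≤ n1 → 1 ≤ n2 → g n1 n2 = g n2 n1) ∧
        (∀ n1 n2 : ℕ, 1 ≤ n1 → 1 ≤ n2 → g n1 n2 < g (n1 + 1) n2)) := by
  constructor
  · intro hadm
    have hsplit := cliqueCostSplits_of_treeCost_cliqueW_eq hadm.treeCost_cliqueW_eq
    exact ⟨hadm.treeCost_cliqueW_eq, fun _ _ => hsplit.symm,
      fun _ _ => hadm.lt_add_one_left hsplit⟩
  · rintro ⟨hclique, hsymm, hlt⟩
    exact admissible_of_cliqueCostSplits (cliqueCostSplits_of_treeCost_cliqueW_eq hclique)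
      (strictMonoOn_uncurry_of_symm_of_lt_succ hsymm hlt)
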